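/- arXiv:1610.07917 — 2 statements merged into one kernel-verified Lean document; each statement's English description precedes it below -/
import Mathlib

section
/- Let (η, ψ, P_ext, φ) be a regular smooth solution of the gravity–capillary water-wave system on [0,T] and let m be a smooth 2L-periodic odd function with m(L) = 0. Then ∫_0^T∫_{−L}^{L} m'(x)·(−η·∂_tψ − (g/2)η² − κ/√(1+η_x²)) dx dt + ∫_0^T F(t) dt = −(∫_{−L}^{L} ∂_x(mη)(T,x)·ψ(T,x) dx − ∫_{−L}^{L} ∂_x(mη)(0,x)·ψ(0,x) dx) − ∫_0^T∫_{−L}^{L} P_ext·m·η_x dx dt, where F(t) = ∫_{−L}^{L}(G(η)ψ)·m·ψ_x dx + ∫_{−L}^{L}(N(η)ψ)·m·η_x dx. -/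
open Real Set MeasureTheory intervalIntegral

noncomputable section

section GenericHelpers
open Function

private lemma hasDerivAt_fst (f : ℝ × ℝ → ℝ) (hf : Differentiable ℝ f) (t x : ℝ) :
    HasDerivAt (fun s => f (s, x)) (fderiv ℝ f (t, x) (1, 0)) t :=
  (hf (t,x)).hasFDerivAt.comp_hasDerivAt t ((hasDerivAt_id t).prodMk (hasDerivAt_const t x))

private lemma hasDerivAt_snd (f : ℝ × ℝ → ℝ) (hf : Differentiable ℝ f) (t x : ℝ) :
    HasDerivAt (fun x' => f (t, x')) (fderiv ℝ f (t, x) (0, 1)) x :=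
  (hf (t,x)).hasFDerivAt.comp_hasDerivAt x ((hasDerivAt_const x t).prodMk (hasDerivAt_id x))

private lemma hasDerivAt_3snd (f : ℝ × ℝ × ℝ → ℝ) (hf : Differentiable ℝ f) (t x y : ℝ) :
    HasDerivAt (fun x' => f (t, x', y)) (fderiv ℝ f (t, x, y) (0, 1, 0)) x :=
  (hf (t,x,y)).hasFDerivAt.comp_hasDerivAt x
    ((hasDerivAt_const x t).prodMk ((hasDerivAt_id x).prodMk (hasDerivAt_const x y)))

private lemma hasDerivAt_3trd (f : ℝ × ℝ × ℝ → ℝ) (hf : Differentiable ℝ f) (t x y : ℝ) :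
    HasDerivAt (fun y' => f (t, x, y')) (fderiv ℝ f (t, x, y) (0, 0, 1)) y :=
  (hf (t,x,y)).hasFDerivAt.comp_hasDerivAt y
    ((hasDerivAt_const y t).prodMk ((hasDerivAt_const y x).prodMk (hasDerivAt_id y)))

private lemma fderiv_apply_cont (f : ℝ × ℝ → ℝ) (hf : ContDiff ℝ (⊤ : ℕ∞) f) (v : ℝ × ℝ) :
    Continuous (fun p => fderiv ℝ f p v) :=
  (hf.continuous_fderiv (by simp)).clm_apply continuous_const

private lemma fderiv_apply_contDiff (f : ℝ × ℝ → ℝ) (hf : ContDiff ℝ (⊤ : ℕ∞) f) (v : ℝ × ℝ) :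
    ContDiff ℝ (⊤ : ℕ∞) (fun p => fderiv ℝ f p v) :=
  (hf.fderiv_right (by simp)).clm_apply contDiff_const

private lemma fderiv_apply_cont3 (f : ℝ × ℝ × ℝ → ℝ) (hf : ContDiff ℝ (⊤ : ℕ∞) f) (v : ℝ × ℝ × ℝ) :
    Continuous (fun p => fderiv ℝ f p v) :=
  (hf.continuous_fderiv (by simp)).clm_apply continuous_const

private lemma fderiv_apply_contDiff3 (f : ℝ × ℝ × ℝ → ℝ) (hf : ContDiff ℝ (⊤ : ℕ∞) f) (v : ℝ × ℝ × ℝ) :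
    ContDiff ℝ (⊤ : ℕ∞) (fun p => fderiv ℝ f p v) :=
  (hf.fderiv_right (by simp)).clm_apply contDiff_const

/-- Clairaut / mixed partials. -/
private lemma mixed_symm (f : ℝ × ℝ → ℝ) (hf : ContDiff ℝ (⊤ : ℕ∞) f) (p : ℝ × ℝ) (v w : ℝ × ℝ) :
    fderiv ℝ (fun q => fderiv ℝ f q v) p w = fderiv ℝ (fun q => fderiv ℝ f q w) p v := by
  have hdf : Differentiable ℝ (fderiv ℝ f) := (hf.fderiv_right (m := (⊤ : ℕ∞)) (by simp)).differentiable (by simp)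
  have h1 : ∀ u : ℝ × ℝ, fderiv ℝ (fun q => fderiv ℝ f q u) p
      = (ContinuousLinearMap.apply ℝ ℝ u).comp (fderiv ℝ (fderiv ℝ f) p) := by
    intro u
    exact (((ContinuousLinearMap.apply ℝ ℝ u).hasFDerivAt).comp p (hdf p).hasFDerivAt).fderiv
  rw [h1 v, h1 w]
  exact second_derivative_symmetric (fun y => (hf.differentiable (by simp) y).hasFDerivAt)
    (hdf p).hasFDerivAt w v

example : True := trivial


end GenericHelpers

/-- Spatial derivative of the surface elevation. -/
def etaX (η : ℝ → ℝ → ℝ) (t x : ℝ) : ℝ := deriv (η t) x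

/-- Horizontal derivative of the velocity potential. -/
def phiX (φ : ℝ → ℝ → ℝ → ℝ) (t x y : ℝ) : ℝ := deriv (fun x' => φ t x' y) x

/-- Vertical derivative of the velocity potential. -/
def phiY (φ : ℝ → ℝ → ℝ → ℝ) (t x y : ℝ) : ℝ := deriv (fun y' => φ t x y') y

/-- The Dirichlet-to-Neumann expression `G(η)ψ`. -/
def DN (η : ℝ → ℝ → ℝ) (φ : ℝ → ℝ → ℝ → ℝ) (t x : ℝ) : ℝ :=
  phiY φ t x (η t x) - etaX η t x * phiX φ t x (η t x)

/-- The quadratic expression `N(η)ψ`. -/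
def NOp (η : ℝ → ℝ → ℝ) (φ : ℝ → ℝ → ℝ → ℝ) (t x : ℝ) : ℝ :=
  (1/2) * (phiX φ t x (η t x))^2 - (1/2) * (phiY φ t x (η t x))^2
    + etaX η t x * phiX φ t x (η t x) * phiY φ t x (η t x)

/-- The curvature `H(η)`. -/
def curv (η : ℝ → ℝ → ℝ) (t x : ℝ) : ℝ :=
  deriv (fun x' => etaX η t x' / Real.sqrt (1 + (etaX η t x')^2)) x

section SolHelpers
open Function
section Sol
variable {η ψ P : ℝ → ℝ → ℝ} {φ : ℝ → ℝ → ℝ → ℝ}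

private lemma slice2 (hη : ContDiff ℝ (⊤ : ℕ∞) (uncurry η)) (t : ℝ) : ContDiff ℝ (⊤ : ℕ∞) (η t) :=
  hη.comp (contDiff_const.prodMk contDiff_id)

private lemma etaX_eq (hη : ContDiff ℝ (⊤ : ℕ∞) (uncurry η)) (t x : ℝ) :
    etaX η t x = fderiv ℝ (uncurry η) (t, x) (0, 1) := by
  have := (hasDerivAt_snd (uncurry η) (hη.differentiable (by simp)) t x).deriv
  simpa [etaX, Function.uncurry] using this

private lemma derivt_eq (hη : ContDiff ℝ (⊤ : ℕ∞) (uncurry η)) (t x : ℝ) :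
    deriv (fun s => η s x) t = fderiv ℝ (uncurry η) (t, x) (1, 0) := by
  have := (hasDerivAt_fst (uncurry η) (hη.differentiable (by simp)) t x).deriv
  simpa [Function.uncurry] using this

private lemma phiX_eq (hφ : ContDiff ℝ (⊤ : ℕ∞) (fun p : ℝ × ℝ × ℝ => φ p.1 p.2.1 p.2.2)) (t x y : ℝ) :
    phiX φ t x y = fderiv ℝ (fun p : ℝ × ℝ × ℝ => φ p.1 p.2.1 p.2.2) (t, x, y) (0, 1, 0) := by
  have := (hasDerivAt_3snd _ (hφ.differentiable (by simp)) t x y).deriv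
  simpa [phiX] using this

private lemma phiY_eq (hφ : ContDiff ℝ (⊤ : ℕ∞) (fun p : ℝ × ℝ × ℝ => φ p.1 p.2.1 p.2.2)) (t x y : ℝ) :
    phiY φ t x y = fderiv ℝ (fun p : ℝ × ℝ × ℝ => φ p.1 p.2.1 p.2.2) (t, x, y) (0, 0, 1) := by
  have := (hasDerivAt_3trd _ (hφ.differentiable (by simp)) t x y).deriv
  simpa [phiY] using this

private lemma graph_cont (hη : ContDiff ℝ (⊤ : ℕ∞) (uncurry η)) :
    Continuous (fun p : ℝ × ℝ => (p.1, p.2, η p.1 p.2)) :=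
  continuous_fst.prodMk (continuous_snd.prodMk (hη.continuous))

private lemma graph_contDiff_x (hη : ContDiff ℝ (⊤ : ℕ∞) (uncurry η)) (t : ℝ) :
    ContDiff ℝ (⊤ : ℕ∞) (fun x : ℝ => (t, x, η t x)) :=
  contDiff_const.prodMk (contDiff_id.prodMk (slice2 hη t))

private lemma DN_eq (hη : ContDiff ℝ (⊤ : ℕ∞) (uncurry η))
    (hφ : ContDiff ℝ (⊤ : ℕ∞) (fun p : ℝ × ℝ × ℝ => φ p.1 p.2.1 p.2.2)) (t x : ℝ) :
    DN η φ t x = fderiv ℝ (fun p : ℝ × ℝ × ℝ => φ p.1 p.2.1 p.2.2) (t, x, η t x) (0, 0, 1)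
      - fderiv ℝ (uncurry η) (t, x) (0, 1)
        * fderiv ℝ (fun p : ℝ × ℝ × ℝ => φ p.1 p.2.1 p.2.2) (t, x, η t x) (0, 1, 0) := by
  rw [DN, phiX_eq hφ, phiY_eq hφ, etaX_eq hη]

private lemma DN_cont (hη : ContDiff ℝ (⊤ : ℕ∞) (uncurry η))
    (hφ : ContDiff ℝ (⊤ : ℕ∞) (fun p : ℝ × ℝ × ℝ => φ p.1 p.2.1 p.2.2)) :
    Continuous (fun p : ℝ × ℝ => DN η φ p.1 p.2) := by
  have : (fun p : ℝ × ℝ => DN η φ p.1 p.2) = fun p : ℝ × ℝ =>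
      (fun q : ℝ × ℝ × ℝ => fderiv ℝ (fun p : ℝ × ℝ × ℝ => φ p.1 p.2.1 p.2.2) q (0, 0, 1))
          (p.1, p.2, η p.1 p.2)
      - fderiv ℝ (uncurry η) p (0, 1)
        * (fun q : ℝ × ℝ × ℝ => fderiv ℝ (fun p : ℝ × ℝ × ℝ => φ p.1 p.2.1 p.2.2) q (0, 1, 0))
            (p.1, p.2, η p.1 p.2) := by
    funext p; exact DN_eq hη hφ p.1 p.2
  rw [this]
  exact ((fderiv_apply_cont3 _ hφ _).comp (graph_cont hη)).sub
    ((fderiv_apply_cont _ hη _).mul ((fderiv_apply_cont3 _ hφ _).comp (graph_cont hη)))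

private lemma DN_contDiff_x (hη : ContDiff ℝ (⊤ : ℕ∞) (uncurry η))
    (hφ : ContDiff ℝ (⊤ : ℕ∞) (fun p : ℝ × ℝ × ℝ => φ p.1 p.2.1 p.2.2)) (t : ℝ) :
    ContDiff ℝ (⊤ : ℕ∞) (DN η φ t) := by
  have : DN η φ t = fun x : ℝ =>
      (fun q : ℝ × ℝ × ℝ => fderiv ℝ (fun p : ℝ × ℝ × ℝ => φ p.1 p.2.1 p.2.2) q (0, 0, 1))
          (t, x, η t x)
      - (fun q : ℝ × ℝ => fderiv ℝ (uncurry η) q (0, 1)) (t, x)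
        * (fun q : ℝ × ℝ × ℝ => fderiv ℝ (fun p : ℝ × ℝ × ℝ => φ p.1 p.2.1 p.2.2) q (0, 1, 0))
            (t, x, η t x) := by
    funext x; exact DN_eq hη hφ t x
  rw [this]
  exact ((fderiv_apply_contDiff3 _ hφ _).comp (graph_contDiff_x hη t)).sub
    (((fderiv_apply_contDiff _ hη _).comp (contDiff_const.prodMk contDiff_id)).mul
      ((fderiv_apply_contDiff3 _ hφ _).comp (graph_contDiff_x hη t)))

private lemma NOp_cont (hη : ContDiff ℝ (⊤ : ℕ∞) (uncurry η))
    (hφ : ContDiff ℝ (⊤ : ℕ∞) (fun p : ℝ × ℝ × ℝ => φ p.1 p.2.1 p.2.2)) :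
    Continuous (fun p : ℝ × ℝ => NOp η φ p.1 p.2) := by
  have hX : Continuous (fun p : ℝ × ℝ => phiX φ p.1 p.2 (η p.1 p.2)) := by
    have : (fun p : ℝ × ℝ => phiX φ p.1 p.2 (η p.1 p.2)) = fun p : ℝ × ℝ =>
        (fun q : ℝ × ℝ × ℝ => fderiv ℝ (fun p : ℝ × ℝ × ℝ => φ p.1 p.2.1 p.2.2) q (0, 1, 0))
          (p.1, p.2, η p.1 p.2) := by
      funext p; exact phiX_eq hφ p.1 p.2 _
    rw [this]; exact (fderiv_apply_cont3 _ hφ _).comp (graph_cont hη)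
  have hY : Continuous (fun p : ℝ × ℝ => phiY φ p.1 p.2 (η p.1 p.2)) := by
    have : (fun p : ℝ × ℝ => phiY φ p.1 p.2 (η p.1 p.2)) = fun p : ℝ × ℝ =>
        (fun q : ℝ × ℝ × ℝ => fderiv ℝ (fun p : ℝ × ℝ × ℝ => φ p.1 p.2.1 p.2.2) q (0, 0, 1))
          (p.1, p.2, η p.1 p.2) := by
      funext p; exact phiY_eq hφ p.1 p.2 _
    rw [this]; exact (fderiv_apply_cont3 _ hφ _).comp (graph_cont hη)
  have hu : Continuous (fun p : ℝ × ℝ => etaX η p.1 p.2) := by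
    have : (fun p : ℝ × ℝ => etaX η p.1 p.2)
        = fun p : ℝ × ℝ => fderiv ℝ (uncurry η) p (0, 1) := by
      funext p; exact etaX_eq hη p.1 p.2
    rw [this]; exact fderiv_apply_cont _ hη _
  unfold NOp
  fun_prop

end Sol

section Sol2
variable {η ψ : ℝ → ℝ → ℝ} {φ : ℝ → ℝ → ℝ → ℝ}

private lemma etaX_contDiff (hη : ContDiff ℝ (⊤ : ℕ∞) (uncurry η)) (t : ℝ) :
    ContDiff ℝ (⊤ : ℕ∞) (etaX η t) := by
  have : etaX η t = fun x => (fun p => fderiv ℝ (uncurry η) p ((0:ℝ), (1:ℝ))) (t, x) :=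
    funext fun x => etaX_eq hη t x
  rw [this]
  exact (fderiv_apply_contDiff _ hη _).comp (contDiff_const.prodMk contDiff_id)

private lemma hasDerivAt_sqrt_eta (hη : ContDiff ℝ (⊤ : ℕ∞) (uncurry η)) (t x : ℝ) :
    HasDerivAt (fun x' => Real.sqrt (1 + (etaX η t x')^2))
      (etaX η t x * deriv (etaX η t) x / Real.sqrt (1 + (etaX η t x)^2)) x := by
  have hu : HasDerivAt (etaX η t) (deriv (etaX η t) x) x :=
    ((etaX_contDiff hη t).differentiable (by simp) x).hasDerivAt
  have hinner : HasDerivAt (fun x' => 1 + (etaX η t x')^2)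
      (2 * etaX η t x * deriv (etaX η t) x) x := by
    have := (hu.fun_pow 2).const_add 1
    refine this.congr_deriv ?_
    push_cast; ring
  have hpos : (0:ℝ) < 1 + (etaX η t x)^2 := by positivity
  have hsp : 0 < Real.sqrt (1 + (etaX η t x)^2) := Real.sqrt_pos.mpr hpos
  have := (Real.hasDerivAt_sqrt hpos.ne').comp x hinner
  refine this.congr_deriv ?_
  field_simp

private lemma curv_eq (hη : ContDiff ℝ (⊤ : ℕ∞) (uncurry η)) (t x : ℝ) :
    curv η t x * (Real.sqrt (1 + (etaX η t x)^2))^3 = deriv (etaX η t) x := by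
  have hu : HasDerivAt (etaX η t) (deriv (etaX η t) x) x :=
    ((etaX_contDiff hη t).differentiable (by simp) x).hasDerivAt
  have hpos : (0:ℝ) < 1 + (etaX η t x)^2 := by positivity
  have hsp : 0 < Real.sqrt (1 + (etaX η t x)^2) := Real.sqrt_pos.mpr hpos
  have hs2 : (Real.sqrt (1 + (etaX η t x)^2))^2 = 1 + (etaX η t x)^2 := Real.sq_sqrt hpos.le
  have hq : HasDerivAt (fun x' => etaX η t x' / Real.sqrt (1 + (etaX η t x')^2))
      ((deriv (etaX η t) x * Real.sqrt (1 + (etaX η t x)^2)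
        - etaX η t x * (etaX η t x * deriv (etaX η t) x / Real.sqrt (1 + (etaX η t x)^2)))
        / (Real.sqrt (1 + (etaX η t x)^2))^2) x :=
    hu.div (hasDerivAt_sqrt_eta hη t x) hsp.ne'
  have hc : curv η t x = _ := hq.deriv
  rw [curv] at hc ⊢
  rw [hc]
  field_simp
  linear_combination (deriv (etaX η t) x) * hs2

private lemma interval_swap (f : ℝ → ℝ → ℝ) (hf : Continuous (uncurry f))
    {a b c d : ℝ} (hab : a ≤ b) (hcd : c ≤ d) :
    (∫ x in a..b, ∫ y in c..d, f x y) = ∫ y in c..d, ∫ x in a..b, f x y := by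
  rw [intervalIntegral.integral_of_le hab, intervalIntegral.integral_of_le hcd]
  simp_rw [intervalIntegral.integral_of_le hab, intervalIntegral.integral_of_le hcd]
  rw [MeasureTheory.integral_integral_swap]
  rw [Measure.prod_restrict]
  exact ((hf.continuousOn).integrableOn_compact (isCompact_Icc.prod isCompact_Icc)).mono_set
    (Set.prod_mono Ioc_subset_Icc_self Ioc_subset_Icc_self)

end Sol2

end SolHelpers

/-- A regular smooth solution of the gravity–capillary water-wave system on `[0,T]`. -/
structure WWSol (L h g κ T : ℝ) where
  η : ℝ → ℝ → ℝ
  ψ : ℝ → ℝ → ℝ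
  Pext : ℝ → ℝ → ℝ
  φ : ℝ → ℝ → ℝ → ℝ
  η_smooth : ContDiff ℝ (⊤ : ℕ∞) (Function.uncurry η)
  ψ_smooth : ContDiff ℝ (⊤ : ℕ∞) (Function.uncurry ψ)
  Pext_smooth : ContDiff ℝ (⊤ : ℕ∞) (Function.uncurry Pext)
  φ_smooth : ContDiff ℝ (⊤ : ℕ∞) (fun p : ℝ × ℝ × ℝ => φ p.1 p.2.1 p.2.2)
  η_per : ∀ t x, η t (x + 2*L) = η t x
  η_even : ∀ t x, η t (-x) = η t x
  ψ_per : ∀ t x, ψ t (x + 2*L) = ψ t x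
  ψ_even : ∀ t x, ψ t (-x) = ψ t x
  Pext_per : ∀ t x, Pext t (x + 2*L) = Pext t x
  Pext_even : ∀ t x, Pext t (-x) = Pext t x
  φ_per : ∀ t x y, φ t (x + 2*L) y = φ t x y
  φ_even : ∀ t x y, φ t (-x) y = φ t x y
  harmonic : ∀ t ∈ Icc (0:ℝ) T, ∀ x y : ℝ, -h < y → y < η t x →
      deriv (fun x' => phiX φ t x' y) x + deriv (fun y' => phiY φ t x y') y = 0
  bottom : ∀ t ∈ Icc (0:ℝ) T, ∀ x : ℝ, phiY φ t x (-h) = 0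
  surface : ∀ t ∈ Icc (0:ℝ) T, ∀ x : ℝ, φ t x (η t x) = ψ t x
  evol_η : ∀ t ∈ Icc (0:ℝ) T, ∀ x : ℝ, deriv (fun s => η s x) t = DN η φ t x
  evol_ψ : ∀ t ∈ Icc (0:ℝ) T, ∀ x : ℝ,
      deriv (fun s => ψ s x) t + g * η t x + NOp η φ t x - κ * curv η t x = - Pext t x
  η_lb : ∀ t ∈ Icc (0:ℝ) T, ∀ x : ℝ, -h/2 ≤ η t x
  η_mean : ∀ t ∈ Icc (0:ℝ) T, (∫ x in (-L)..L, η t x) = 0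
  Pext_mean : ∀ t ∈ Icc (0:ℝ) T, (∫ x in (-L)..L, Pext t x) = 0

/-- The total energy `ℋ(t)`. -/
def energy (L h g κ : ℝ) (η : ℝ → ℝ → ℝ) (φ : ℝ → ℝ → ℝ → ℝ) (t : ℝ) : ℝ :=
  g/2 * (∫ x in (-L)..L, (η t x)^2)
  + κ * (∫ x in (-L)..L, (Real.sqrt (1 + (etaX η t x)^2) - 1))
  + 1/2 * (∫ x in (-L)..L, ∫ y in (-h)..(η t x), ((phiX φ t x y)^2 + (phiY φ t x y)^2))

/-- `ψ` minus its spatial average, denoted `ψ̃` in the paper. -/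
def psit (L : ℝ) (ψ : ℝ → ℝ → ℝ) (t x : ℝ) : ℝ :=
  ψ t x - (1/(2*L)) * ∫ x' in (-L)..L, ψ t x'

/-- The multiplier quantity `ζ = ∂ₓ(mη) + (3/2)(1-m')η - (1/4)η`. -/
def zeta (m : ℝ → ℝ) (η : ℝ → ℝ → ℝ) (t x : ℝ) : ℝ :=
  deriv (fun x' => m x' * η t x') x + 3/2 * (1 - deriv m x) * η t x - 1/4 * η t x

/-- The quantity `ρ = ζ + η - x ηₓ`. -/
def rho (m : ℝ → ℝ) (η : ℝ → ℝ → ℝ) (t x : ℝ) : ℝ :=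
  zeta m η t x + η t x - x * etaX η t x

/-- The modified energy `H̃(t)`. -/
def Htilde (L g κ : ℝ) (η ψ : ℝ → ℝ → ℝ) (φ : ℝ → ℝ → ℝ → ℝ) (t : ℝ) : ℝ :=
  ∫ x in (-L)..L, (g/2 * (η t x)^2
    + κ * (etaX η t x)^2 / Real.sqrt (1 + (etaX η t x)^2)
    + 1/2 * ψ t x * DN η φ t x)

/-- The remainder `R₁(t)`. -/
def R1 (L κ : ℝ) (m : ℝ → ℝ) (η : ℝ → ℝ → ℝ) (t : ℝ) : ℝ :=
  κ * (∫ x in (-L)..L, deriv (deriv m) x * η t x * etaX η t x / Real.sqrt (1 + (etaX η t x)^2))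
  + κ * (∫ x in (-L)..L, deriv m x *
      (1 - (etaX η t x)^2 / (2 * Real.sqrt (1 + (etaX η t x)^2))
         - 1 / Real.sqrt (1 + (etaX η t x)^2)))

/-- The remainder `R₂(t)`. -/
def R2 (L g κ : ℝ) (m : ℝ → ℝ) (η : ℝ → ℝ → ℝ) (t : ℝ) : ℝ :=
  -(κ/2) * (∫ x in (-L)..L, deriv (deriv m) x * η t x * etaX η t x / Real.sqrt (1 + (etaX η t x)^2))
  + κ * (∫ x in (-L)..L, deriv m x *
      (1 - (etaX η t x)^2 / (2 * Real.sqrt (1 + (etaX η t x)^2))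
         - 1 / Real.sqrt (1 + (etaX η t x)^2)))
  + 3*κ/4 * (∫ x in (-L)..L, (etaX η t x)^2 / Real.sqrt (1 + (etaX η t x)^2))
  + g * (∫ x in (-L)..L, (1 - deriv m x) * (η t x)^2)

/-- The remainder `R₃(t)`. -/
def R3 (L h g κ : ℝ) (m : ℝ → ℝ) (η : ℝ → ℝ → ℝ) (φ : ℝ → ℝ → ℝ → ℝ) (t : ℝ) : ℝ :=
  R2 L g κ m η t
  + 1/2 * (∫ x in (-L)..L, (h + rho m η t x) * (phiX φ t x (-h))^2)
  + L * (∫ y in (-h)..(η t L), (phiY φ t L y)^2)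

/-- The quantity `β(t)`. -/
def betaq (L : ℝ) (m : ℝ → ℝ) (η : ℝ → ℝ → ℝ) (t : ℝ) : ℝ :=
  3/(8*L) * ∫ x in (-L)..L, (1 - deriv m x) * η t x

/-- The remainder `R₄(t)`. -/
def R4 (L h g κ : ℝ) (m : ℝ → ℝ) (η : ℝ → ℝ → ℝ) (φ : ℝ → ℝ → ℝ → ℝ) (t : ℝ) : ℝ :=
  R3 L h g κ m η φ t - betaq L m η t * ∫ x in (-L)..L, (phiX φ t x (-h))^2

set_option maxHeartbeats 2000000 in
/-- the multiplier identity (Lemma 3.3 of the paper). -/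
theorem multiplier_identity
    (L h g κ T : ℝ) (hL : 0 < L) (hh : 0 < h) (hg : 0 < g) (hκ : 0 < κ) (hT : 0 < T)
    (sol : WWSol L h g κ T)
    (m : ℝ → ℝ) (hm : ContDiff ℝ (⊤ : ℕ∞) m) (hmper : ∀ x, m (x + 2*L) = m x)
    (hmodd : ∀ x, m (-x) = - m x) (hmL : m L = 0) :
    (∫ t in (0:ℝ)..T, ∫ x in (-L)..L,
        deriv m x * (- sol.η t x * deriv (fun s => sol.ψ s x) t
          - g/2 * (sol.η t x)^2 - κ / Real.sqrt (1 + (etaX sol.η t x)^2)))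
    + (∫ t in (0:ℝ)..T,
        (∫ x in (-L)..L, DN sol.η sol.φ t x * m x * deriv (sol.ψ t) x)
        + (∫ x in (-L)..L, NOp sol.η sol.φ t x * m x * etaX sol.η t x))
    = -((∫ x in (-L)..L, deriv (fun x' => m x' * sol.η T x') x * sol.ψ T x)
        - (∫ x in (-L)..L, deriv (fun x' => m x' * sol.η 0 x') x * sol.ψ 0 x))
      - (∫ t in (0:ℝ)..T, ∫ x in (-L)..L, sol.Pext t x * m x * etaX sol.η t x) := by
  obtain ⟨η, ψ, P, φ, hη, hψ, hP, hφ, _, _, _, _, _, _, _, _, _, _, _, evolη, evolψ, _, _, _⟩ := sol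
  simp only at *
  -- basic smoothness facts
  have hmd : Differentiable ℝ m := hm.differentiable (by simp)
  have hm'c : Continuous (deriv m) := by
    have h1 : deriv m = fun x => fderiv ℝ m x 1 := rfl
    rw [h1]
    exact (hm.continuous_fderiv (by simp)).clm_apply continuous_const
  have hmLneg : m (-L) = 0 := by rw [hmodd L, hmL]; ring
  -- joint continuity facts
  have Jη : Continuous (fun p : ℝ × ℝ => η p.1 p.2) := hη.continuous
  have Jψ : Continuous (fun p : ℝ × ℝ => ψ p.1 p.2) := hψ.continuous
  have JP : Continuous (fun p : ℝ × ℝ => P p.1 p.2) := hP.continuous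
  have JηX : Continuous (fun p : ℝ × ℝ => etaX η p.1 p.2) := by
    have : (fun p : ℝ × ℝ => etaX η p.1 p.2)
        = fun p : ℝ × ℝ => fderiv ℝ (Function.uncurry η) p (0, 1) :=
      funext fun p => etaX_eq hη p.1 p.2
    rw [this]; exact fderiv_apply_cont _ hη _
  have JψX : Continuous (fun p : ℝ × ℝ => deriv (ψ p.1) p.2) := by
    have : (fun p : ℝ × ℝ => deriv (ψ p.1) p.2)
        = fun p : ℝ × ℝ => fderiv ℝ (Function.uncurry ψ) p (0, 1) :=
      funext fun p => etaX_eq hψ p.1 p.2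
    rw [this]; exact fderiv_apply_cont _ hψ _
  have Jψt : Continuous (fun p : ℝ × ℝ => deriv (fun s => ψ s p.2) p.1) := by
    have : (fun p : ℝ × ℝ => deriv (fun s => ψ s p.2) p.1)
        = fun p : ℝ × ℝ => fderiv ℝ (Function.uncurry ψ) p (1, 0) :=
      funext fun p => derivt_eq hψ p.1 p.2
    rw [this]; exact fderiv_apply_cont _ hψ _
  have Jηt : Continuous (fun p : ℝ × ℝ => fderiv ℝ (Function.uncurry η) p (1, 0)) :=
    fderiv_apply_cont _ hη _
  have Jψt' : Continuous (fun p : ℝ × ℝ => fderiv ℝ (Function.uncurry ψ) p (1, 0)) :=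
    fderiv_apply_cont _ hψ _
  have Jmix : Continuous (fun p : ℝ × ℝ =>
      fderiv ℝ (fun q => fderiv ℝ (Function.uncurry η) q (0, 1)) p (1, 0)) :=
    fderiv_apply_cont _ (fderiv_apply_contDiff _ hη _) _
  have JDN : Continuous (fun p : ℝ × ℝ => DN η φ p.1 p.2) := DN_cont hη hφ
  have JNOp : Continuous (fun p : ℝ × ℝ => NOp η φ p.1 p.2) := NOp_cont hη hφ
  have Jsq : Continuous (fun p : ℝ × ℝ => Real.sqrt (1 + (etaX η p.1 p.2)^2)) :=
    Real.continuous_sqrt.comp (continuous_const.add (JηX.pow 2))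
  have Jsqne : ∀ p : ℝ × ℝ, Real.sqrt (1 + (etaX η p.1 p.2)^2) ≠ 0 := fun p =>
    (Real.sqrt_pos.mpr (by positivity)).ne'
  have Jm : Continuous (fun p : ℝ × ℝ => m p.2) := hm.continuous.comp continuous_snd
  have Jm' : Continuous (fun p : ℝ × ℝ => deriv m p.2) := hm'c.comp continuous_snd
  -- the integrands, as joint functions
  set i1 : ℝ → ℝ → ℝ := fun t x => deriv m x * (- η t x * deriv (fun s => ψ s x) t
      - g/2 * (η t x)^2 - κ / Real.sqrt (1 + (etaX η t x)^2)) with hi1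
  set i2a : ℝ → ℝ → ℝ := fun t x => DN η φ t x * m x * deriv (ψ t) x with hi2a
  set i2b : ℝ → ℝ → ℝ := fun t x => NOp η φ t x * m x * etaX η t x with hi2b
  set i4 : ℝ → ℝ → ℝ := fun t x => P t x * m x * etaX η t x with hi4
  set Ef : ℝ → ℝ → ℝ := fun t x =>
      (deriv m x * fderiv ℝ (Function.uncurry η) (t, x) (1, 0)
        + m x * fderiv ℝ (fun q => fderiv ℝ (Function.uncurry η) q (0, 1)) (t, x) (1, 0)) * ψ t x
      + (deriv m x * η t x + m x * etaX η t x) * fderiv ℝ (Function.uncurry ψ) (t, x) (1, 0)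
    with hEfdef
  -- joint continuity of the integrands
  have Ci1 : Continuous (fun p : ℝ × ℝ => i1 p.1 p.2) := by
    apply Jm'.mul
    exact ((Jη.neg.mul Jψt).sub (continuous_const.mul (Jη.pow 2))).sub
      (continuous_const.div Jsq Jsqne)
  have Ci2a : Continuous (fun p : ℝ × ℝ => i2a p.1 p.2) := (JDN.mul Jm).mul JψX
  have Ci2b : Continuous (fun p : ℝ × ℝ => i2b p.1 p.2) := (JNOp.mul Jm).mul JηX
  have Ci4 : Continuous (fun p : ℝ × ℝ => i4 p.1 p.2) := (JP.mul Jm).mul JηX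
  have CEf : Continuous (fun p : ℝ × ℝ => Ef p.1 p.2) := by
    apply Continuous.add
    · exact ((Jm'.mul Jηt).add (Jm.mul Jmix)).mul Jψ
    · exact ((Jm'.mul Jη).add (Jm.mul JηX)).mul Jψt'
  -- time derivative of F
  have hEf : ∀ t x : ℝ, HasDerivAt
      (fun s => (deriv m x * η s x + m x * etaX η s x) * ψ s x) (Ef t x) t := by
    intro t x
    have aη : HasDerivAt (fun s => η s x) (fderiv ℝ (Function.uncurry η) (t, x) (1, 0)) t := by
      simpa [Function.uncurry] using hasDerivAt_fst (Function.uncurry η) (hη.differentiable (by simp)) t x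
    have aηx : HasDerivAt (fun s => etaX η s x)
        (fderiv ℝ (fun q => fderiv ℝ (Function.uncurry η) q (0, 1)) (t, x) (1, 0)) t := by
      have hfun : (fun s => etaX η s x)
          = fun s => (fun q => fderiv ℝ (Function.uncurry η) q (0, 1)) (s, x) :=
        funext fun s => etaX_eq hη s x
      rw [hfun]
      exact hasDerivAt_fst _ ((fderiv_apply_contDiff _ hη _).differentiable (by simp)) t x
    have aψ : HasDerivAt (fun s => ψ s x) (fderiv ℝ (Function.uncurry ψ) (t, x) (1, 0)) t := by
      simpa [Function.uncurry] using hasDerivAt_fst (Function.uncurry ψ) (hψ.differentiable (by simp)) t x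
    exact ((aη.const_mul (deriv m x)).add (aηx.const_mul (m x))).mul aψ
  -- main pointwise derivative identity
  have hW : ∀ t ∈ Icc (0:ℝ) T, ∀ x : ℝ, HasDerivAt
      (fun x' => m x' * (DN η φ t x' * ψ t x' - g/2 * (η t x')^2
        - κ / Real.sqrt (1 + (etaX η t x')^2)))
      (i1 t x + (i2a t x + i2b t x) + Ef t x + i4 t x) x := by
    intro t ht x
    have hpos : (0:ℝ) < 1 + (etaX η t x)^2 := by positivity
    have hsp : 0 < Real.sqrt (1 + (etaX η t x)^2) := Real.sqrt_pos.mpr hpos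
    have hs2 : (Real.sqrt (1 + (etaX η t x)^2))^2 = 1 + (etaX η t x)^2 := Real.sq_sqrt hpos.le
    have hC3 := curv_eq hη t x
    have hm'x : HasDerivAt m (deriv m x) x := (hmd x).hasDerivAt
    have hGx : HasDerivAt (DN η φ t) (deriv (DN η φ t) x) x :=
      ((DN_contDiff_x hη hφ t).differentiable (by simp) x).hasDerivAt
    have hψx : HasDerivAt (ψ t) (deriv (ψ t) x) x :=
      ((slice2 hψ t).differentiable (by simp) x).hasDerivAt
    have hηx : HasDerivAt (η t) (etaX η t x) x :=
      ((slice2 hη t).differentiable (by simp) x).hasDerivAt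
    have hsq := hasDerivAt_sqrt_eta hη t x
    have hdiv : HasDerivAt (fun x' => κ / Real.sqrt (1 + (etaX η t x')^2))
        ((0 * Real.sqrt (1 + (etaX η t x)^2)
          - κ * (etaX η t x * deriv (etaX η t) x / Real.sqrt (1 + (etaX η t x)^2)))
          / (Real.sqrt (1 + (etaX η t x)^2))^2) x :=
      (hasDerivAt_const x κ).div hsq hsp.ne'
    have total := hm'x.fun_mul (((hGx.fun_mul hψx).fun_sub ((hηx.fun_pow 2).const_mul (g/2))).fun_sub hdiv)
    refine total.congr_deriv ?_
    symm
    -- substitutions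
    have eψt : deriv (fun s => ψ s x) t
        = -P t x - g * η t x - NOp η φ t x + κ * curv η t x := by
      have := evolψ t ht x; linarith
    have eG : fderiv ℝ (Function.uncurry η) (t, x) (1, 0) = DN η φ t x := by
      rw [← derivt_eq hη t x]; exact evolη t ht x
    have eMix : fderiv ℝ (fun q => fderiv ℝ (Function.uncurry η) q (0, 1)) (t, x) (1, 0)
        = deriv (DN η φ t) x := by
      rw [mixed_symm (Function.uncurry η) hη (t, x) (0, 1) (1, 0)]
      have h2 : fderiv ℝ (fun q => fderiv ℝ (Function.uncurry η) q (1, 0)) (t, x) (0, 1)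
          = deriv (fun x' => fderiv ℝ (Function.uncurry η) (t, x') (1, 0)) x :=
        (hasDerivAt_snd _ ((fderiv_apply_contDiff _ hη _).differentiable (by simp)) t x).deriv.symm
      have h3 : (fun x' => fderiv ℝ (Function.uncurry η) (t, x') (1, 0)) = DN η φ t := by
        funext x'
        rw [← derivt_eq hη t x']
        exact evolη t ht x'
      rw [h2, h3]
    have eψu : fderiv ℝ (Function.uncurry ψ) (t, x) (1, 0) = deriv (fun s => ψ s x) t :=
      (derivt_eq hψ t x).symm
    rw [hi1, hi2a, hi2b, hi4, hEfdef]
    simp only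
    have ecurv : curv η t x = deriv (etaX η t) x / (Real.sqrt (1 + (etaX η t x)^2))^3 :=
      (eq_div_iff (by positivity)).mpr hC3
    rw [eG, eMix, eψu, eψt, ecurv]
    push_cast
    field_simp
    ring
  -- per-time integral identity
  have hkey : ∀ t ∈ Icc (0:ℝ) T,
      (∫ x in (-L)..L, i1 t x) + ((∫ x in (-L)..L, i2a t x) + (∫ x in (-L)..L, i2b t x))
        + (∫ x in (-L)..L, Ef t x) + (∫ x in (-L)..L, i4 t x) = 0 := by
    intro t ht
    have c1 : Continuous (fun x => i1 t x) := Ci1.comp (continuous_const.prodMk continuous_id)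
    have c2a : Continuous (fun x => i2a t x) := Ci2a.comp (continuous_const.prodMk continuous_id)
    have c2b : Continuous (fun x => i2b t x) := Ci2b.comp (continuous_const.prodMk continuous_id)
    have c4 : Continuous (fun x => i4 t x) := Ci4.comp (continuous_const.prodMk continuous_id)
    have cE : Continuous (fun x => Ef t x) := CEf.comp (continuous_const.prodMk continuous_id)
    rw [← intervalIntegral.integral_add (c2a.intervalIntegrable _ _) (c2b.intervalIntegrable _ _),
      ← intervalIntegral.integral_add (c1.intervalIntegrable _ _)
        ((c2a.fun_add c2b).intervalIntegrable _ _),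
      ← intervalIntegral.integral_add ((c1.fun_add (c2a.fun_add c2b)).intervalIntegrable _ _)
        (cE.intervalIntegrable _ _),
      ← intervalIntegral.integral_add (((c1.fun_add (c2a.fun_add c2b)).fun_add cE).intervalIntegrable _ _)
        (c4.intervalIntegrable _ _)]
    rw [intervalIntegral.integral_eq_sub_of_hasDerivAt (fun x _ => hW t ht x)
      ((((c1.fun_add (c2a.fun_add c2b)).fun_add cE).fun_add c4).intervalIntegrable _ _)]
    simp [hmL, hmLneg]
  -- FTC in time
  have hFTC : ∀ x : ℝ, (∫ t in (0:ℝ)..T, Ef t x)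
      = (deriv m x * η T x + m x * etaX η T x) * ψ T x
        - (deriv m x * η 0 x + m x * etaX η 0 x) * ψ 0 x := by
    intro x
    exact intervalIntegral.integral_eq_sub_of_hasDerivAt (fun t _ => hEf t x)
      ((CEf.comp (continuous_id.prodMk continuous_const)).intervalIntegrable _ _)
  -- rewrite the boundary integrands
  have hbd : ∀ t : ℝ, (∫ x in (-L)..L, deriv (fun x' => m x' * η t x') x * ψ t x)
      = ∫ x in (-L)..L, (deriv m x * η t x + m x * etaX η t x) * ψ t x := by
    intro t
    apply intervalIntegral.integral_congr
    intro x _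
    have hd : deriv (fun x' => m x' * η t x') x = deriv m x * η t x + m x * etaX η t x :=
      ((hmd x).hasDerivAt.mul ((slice2 hη t).differentiable (by simp) x).hasDerivAt).deriv
    show deriv (fun x' => m x' * η t x') x * ψ t x = (deriv m x * η t x + m x * etaX η t x) * ψ t x
    rw [hd]
  -- Fubini for Ef
  have hswap : (∫ x in (-L)..L, ∫ t in (0:ℝ)..T, Ef t x)
      = ∫ t in (0:ℝ)..T, ∫ x in (-L)..L, Ef t x := by
    exact interval_swap (fun x t => Ef t x)
      (CEf.comp (continuous_snd.prodMk continuous_fst)) (by linarith) hT.le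
  -- continuity of the parametric integrals
  have hCA : Continuous (fun t => ∫ x in (-L)..L, i1 t x) :=
    intervalIntegral.continuous_parametric_intervalIntegral_of_continuous' (f := i1) Ci1 _ _
  have hCB : Continuous (fun t => (∫ x in (-L)..L, i2a t x) + (∫ x in (-L)..L, i2b t x)) :=
    (intervalIntegral.continuous_parametric_intervalIntegral_of_continuous' (f := i2a) Ci2a _ _).add
      (intervalIntegral.continuous_parametric_intervalIntegral_of_continuous' (f := i2b) Ci2b _ _)
  have hCC : Continuous (fun t => ∫ x in (-L)..L, Ef t x) :=
    intervalIntegral.continuous_parametric_intervalIntegral_of_continuous' (f := Ef) CEf _ _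
  have hCD : Continuous (fun t => ∫ x in (-L)..L, i4 t x) :=
    intervalIntegral.continuous_parametric_intervalIntegral_of_continuous' (f := i4) Ci4 _ _
  -- final assembly
  have hAB : (∫ t in (0:ℝ)..T, ∫ x in (-L)..L, i1 t x)
      + (∫ t in (0:ℝ)..T, ((∫ x in (-L)..L, i2a t x) + (∫ x in (-L)..L, i2b t x)))
      = ∫ t in (0:ℝ)..T, ((∫ x in (-L)..L, i1 t x)
          + ((∫ x in (-L)..L, i2a t x) + (∫ x in (-L)..L, i2b t x))) :=
    (intervalIntegral.integral_add (hCA.intervalIntegrable _ _)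
      (hCB.intervalIntegrable _ _)).symm
  rw [hbd T, hbd 0, hAB]
  have hcongr : (∫ t in (0:ℝ)..T, ((∫ x in (-L)..L, i1 t x)
      + ((∫ x in (-L)..L, i2a t x) + (∫ x in (-L)..L, i2b t x))))
      = ∫ t in (0:ℝ)..T, (-(∫ x in (-L)..L, Ef t x) - (∫ x in (-L)..L, i4 t x)) := by
    apply intervalIntegral.integral_congr
    intro t ht
    rw [uIcc_of_le hT.le] at ht
    have hk := hkey t ht
    show (∫ x in (-L)..L, i1 t x) + ((∫ x in (-L)..L, i2a t x) + (∫ x in (-L)..L, i2b t x))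
      = -(∫ x in (-L)..L, Ef t x) - (∫ x in (-L)..L, i4 t x)
    linarith
  rw [hcongr, intervalIntegral.integral_sub (hCC.fun_neg.intervalIntegrable _ _)
    (hCD.intervalIntegrable _ _), intervalIntegral.integral_neg]
  have hEint : (∫ t in (0:ℝ)..T, ∫ x in (-L)..L, Ef t x)
      = (∫ x in (-L)..L, (deriv m x * η T x + m x * etaX η T x) * ψ T x)
        - (∫ x in (-L)..L, (deriv m x * η 0 x + m x * etaX η 0 x) * ψ 0 x) := by
    rw [← hswap]
    have : (∫ x in (-L)..L, ∫ t in (0:ℝ)..T, Ef t x)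
        = ∫ x in (-L)..L, ((deriv m x * η T x + m x * etaX η T x) * ψ T x
            - (deriv m x * η 0 x + m x * etaX η 0 x) * ψ 0 x) :=
      intervalIntegral.integral_congr (fun x _ => hFTC x)
    rw [this]
    apply intervalIntegral.integral_sub
    · have : Continuous (fun x => (deriv m x * η T x + m x * etaX η T x) * ψ T x) := by
        have h1 : Continuous (fun x => deriv m x) := hm'c
        have h2 : Continuous (fun x => η T x) := Jη.comp (continuous_const.prodMk continuous_id)
        have h3 : Continuous (fun x => etaX η T x) := JηX.comp (continuous_const.prodMk continuous_id)
        have h4 : Continuous (fun x => ψ T x) := Jψ.comp (continuous_const.prodMk continuous_id)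
        exact ((h1.mul h2).add (hm.continuous.mul h3)).mul h4
      exact this.intervalIntegrable _ _
    · have : Continuous (fun x => (deriv m x * η 0 x + m x * etaX η 0 x) * ψ 0 x) := by
        have h2 : Continuous (fun x => η 0 x) := Jη.comp (continuous_const.prodMk continuous_id)
        have h3 : Continuous (fun x => etaX η 0 x) := JηX.comp (continuous_const.prodMk continuous_id)
        have h4 : Continuous (fun x => ψ 0 x) := Jψ.comp (continuous_const.prodMk continuous_id)
        exact ((hm'c.mul h2).add (hm.continuous.mul h3)).mul h4
      exact this.intervalIntegrable _ _
  rw [hEint]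
end
end

section
/- Let (η, ψ, P_ext, φ) be a regular smooth solution of the gravity–capillary water-wave system on [0,T] and let m be a smooth 2L-periodic odd function with m(L) = 0. Set ζ = ∂_x(mη) + (3/2)(1 − m')η − (1/4)η, H̃(t) = ∫_{−L}^{L}((g/2)η² + κη_x²/√(1+η_x²) + (1/2)ψ·G(η)ψ) dx, and R₂(t) = −(κ/2)∫_{−L}^{L} m''·η·η_x/√(1+η_x²) dx + κ∫_{−L}^{L} m'·(1 − η_x²/(2√(1+η_x²)) − 1/√(1+η_x²)) dx + (3κ/4)∫_{−L}^{L} η_x²/√(1+η_x²) dx + g∫_{−L}^{L}(1 − m')η² dx. Then (1/2)∫_0^T H̃(t) dt + ∫_0^T R₂(t) dt = (3/2)∫_0^T∫_{−L}^{L}(1 − m')ψ·G(η)ψ dx dt − ∫_0^T∫_{−L}^{L} P_ext·ζ dx dt − (∫_{−L}^{L} ψ(T,x)ζ(T,x) dx − ∫_{−L}^{L} ψ(0,x)ζ(0,x) dx) − ∫_0^T∫_{−L}^{L} m·ψ_x·G(η)ψ dx dt − ∫_0^T∫_{−L}^{L} ζ·N(η)ψ dx dt. -/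
open Real Set MeasureTheory intervalIntegral

noncomputable section

section WWHelpers
open Function ContDiff

lemma nat_le_inf (n : ℕ) : (n : WithTop ℕ∞) ≤ ∞ :=
  le_of_lt (WithTop.coe_lt_coe.mpr (ENat.coe_lt_top n)) |>.trans le_rfl

lemma contDiff_deriv_comp {E : Type*} [NormedAddCommGroup E] [NormedSpace ℝ E]
    {F : E → ℝ → ℝ} (hF : ContDiff ℝ ∞ (uncurry F)) {g : E → ℝ} (hg : ContDiff ℝ ∞ g) :
    ContDiff ℝ ∞ (fun p => deriv (F p) (g p)) := by
  have h1 : ContDiff ℝ ∞ (fun p => fderiv ℝ (F p) (g p) 1) :=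
    ContDiff.fderiv_apply (f := F) (g := g) (k := fun _ => (1:ℝ)) hF hg contDiff_const
      (by exact_mod_cast le_top)
  simpa only [fderiv_apply_one_eq_deriv] using h1

lemma hasDerivAt_partial2 {F : ℝ → ℝ → ℝ} (hF : ContDiff ℝ ∞ (uncurry F)) (t x : ℝ) :
    HasDerivAt (F t) (fderiv ℝ (uncurry F) (t, x) (0, 1)) x := by
  have hd : HasFDerivAt (uncurry F) (fderiv ℝ (uncurry F) (t, x)) (t, x) :=
    (hF.differentiable (by simp)).differentiableAt.hasFDerivAt
  have hline : HasDerivAt (fun x' : ℝ => ((t, x') : ℝ × ℝ)) ((0 : ℝ), (1 : ℝ)) x :=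
    (hasDerivAt_const x t).prodMk (hasDerivAt_id x)
  exact hd.comp_hasDerivAt x hline

lemma hasDerivAt_partial1 {F : ℝ → ℝ → ℝ} (hF : ContDiff ℝ ∞ (uncurry F)) (t x : ℝ) :
    HasDerivAt (fun s => F s x) (fderiv ℝ (uncurry F) (t, x) (1, 0)) t := by
  have hd : HasFDerivAt (uncurry F) (fderiv ℝ (uncurry F) (t, x)) (t, x) :=
    (hF.differentiable (by simp)).differentiableAt.hasFDerivAt
  have hline : HasDerivAt (fun s : ℝ => ((s, x) : ℝ × ℝ)) ((1 : ℝ), (0 : ℝ)) t :=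
    (hasDerivAt_id t).prodMk (hasDerivAt_const t x)
  exact hd.comp_hasDerivAt t hline

lemma clairaut {F : ℝ → ℝ → ℝ} (hF : ContDiff ℝ ∞ (uncurry F)) (t x : ℝ) :
    HasDerivAt (fun s => deriv (F s) x)
      (deriv (fun x' => deriv (fun s => F s x') t) x) t := by
  set u := uncurry F with hu
  set D := fderiv ℝ u with hD
  have hDsmooth : ContDiff ℝ ∞ D := hF.fderiv_right (by exact_mod_cast le_top)
  have e1 : (fun s => deriv (F s) x) = fun s => D (s, x) (0, 1) := by
    funext s; exact (hasDerivAt_partial2 hF s x).deriv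
  have hDat : HasFDerivAt D (fderiv ℝ D (t, x)) (t, x) :=
    (hDsmooth.differentiable (by simp)).differentiableAt.hasFDerivAt
  have hline1 : HasDerivAt (fun s : ℝ => ((s, x) : ℝ × ℝ)) ((1 : ℝ), (0 : ℝ)) t :=
    (hasDerivAt_id t).prodMk (hasDerivAt_const t x)
  have h2 : HasDerivAt (fun s => D (s, x)) (fderiv ℝ D (t, x) (1, 0)) t :=
    hDat.comp_hasDerivAt t hline1
  have h3 : HasDerivAt (fun s => D (s, x) (0, 1)) (fderiv ℝ D (t, x) (1, 0) (0, 1)) t := by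
    simpa using h2.clm_apply (hasDerivAt_const t ((0 : ℝ), (1 : ℝ)))
  have hsymm : fderiv ℝ D (t, x) (1, 0) (0, 1) = fderiv ℝ D (t, x) (0, 1) (1, 0) :=
    ((hF.contDiffAt (x := ((t, x) : ℝ × ℝ))).isSymmSndFDerivAt (by simpa using nat_le_inf 2)).eq _ _
  have e2 : (fun x' => deriv (fun s => F s x') t) = fun x' => D (t, x') (1, 0) := by
    funext x'; exact (hasDerivAt_partial1 hF t x').deriv
  have hline2 : HasDerivAt (fun x' : ℝ => ((t, x') : ℝ × ℝ)) ((0 : ℝ), (1 : ℝ)) x :=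
    (hasDerivAt_const x t).prodMk (hasDerivAt_id x)
  have h4 : HasDerivAt (fun x' => D (t, x')) (fderiv ℝ D (t, x) (0, 1)) x :=
    hDat.comp_hasDerivAt x hline2
  have h5 : HasDerivAt (fun x' => D (t, x') (1, 0)) (fderiv ℝ D (t, x) (0, 1) (1, 0)) x := by
    simpa using h4.clm_apply (hasDerivAt_const x ((1 : ℝ), (0 : ℝ)))
  rw [e1, e2, h5.deriv, ← hsymm]
  exact h3

lemma deriv_periodic {f : ℝ → ℝ} {c : ℝ} (hf : ∀ x, f (x + c) = f x) (x : ℝ) :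
    deriv f (x + c) = deriv f x := by
  have h : (fun y => f (y + c)) = f := funext hf
  conv_rhs => rw [← h]
  rw [deriv_comp_add_const]

lemma ibp_boundary {L : ℝ} {u v u' v' : ℝ → ℝ}
    (hu : ∀ x, HasDerivAt u (u' x) x) (hv : ∀ x, HasDerivAt v (v' x) x)
    (hu' : Continuous u') (hv' : Continuous v')
    (hb : u L * v L = u (-L) * v (-L)) :
    ∫ x in (-L)..L, u x * v' x = - ∫ x in (-L)..L, u' x * v x := by
  rw [integral_mul_deriv_eq_deriv_mul (fun x _ => hu x) (fun x _ => hv x)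
    (hu'.intervalIntegrable _ _) (hv'.intervalIntegrable _ _), hb]
  ring

lemma integral_integral_swap_cont {F : ℝ → ℝ → ℝ} (hF : Continuous (uncurry F))
    {a b c d : ℝ} (hab : a ≤ b) (hcd : c ≤ d) :
    ∫ t in a..b, ∫ x in c..d, F t x = ∫ x in c..d, ∫ t in a..b, F t x := by
  rw [intervalIntegral.integral_of_le hab, intervalIntegral.integral_of_le hcd]
  simp_rw [intervalIntegral.integral_of_le hab, intervalIntegral.integral_of_le hcd]
  apply MeasureTheory.integral_integral_swap
  have h2 : IntegrableOn (uncurry F) (Ioc a b ×ˢ Ioc c d) (volume.prod volume) := by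
    apply (hF.continuousOn.integrableOn_compact (isCompact_Icc.prod isCompact_Icc)).mono_set
    exact Set.prod_mono Ioc_subset_Icc_self Ioc_subset_Icc_self
  rwa [IntegrableOn, ← Measure.prod_restrict] at h2

section smoothness
variable {η ψ : ℝ → ℝ → ℝ} {φ : ℝ → ℝ → ℝ → ℝ} {m : ℝ → ℝ}

lemma contDiff_etaX (hη : ContDiff ℝ ∞ (uncurry η)) :
    ContDiff ℝ ∞ (fun p : ℝ × ℝ => etaX η p.1 p.2) := by
  apply contDiff_deriv_comp (F := fun (p : ℝ × ℝ) x' => η p.1 x') (g := Prod.snd)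
  · exact hη.comp ((contDiff_fst.comp contDiff_fst).prodMk contDiff_snd)
  · exact contDiff_snd

lemma contDiff_phiX (hφ : ContDiff ℝ ∞ (fun p : ℝ × ℝ × ℝ => φ p.1 p.2.1 p.2.2)) :
    ContDiff ℝ ∞ (fun p : ℝ × ℝ × ℝ => phiX φ p.1 p.2.1 p.2.2) := by
  apply contDiff_deriv_comp (F := fun (p : ℝ × ℝ × ℝ) x' => φ p.1 x' p.2.2)
    (g := fun p => p.2.1)
  · exact hφ.comp (((contDiff_fst.comp contDiff_fst)).prodMk
      (contDiff_snd.prodMk ((contDiff_snd.comp contDiff_snd).comp contDiff_fst)))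
  · exact contDiff_fst.comp contDiff_snd

lemma contDiff_phiY (hφ : ContDiff ℝ ∞ (fun p : ℝ × ℝ × ℝ => φ p.1 p.2.1 p.2.2)) :
    ContDiff ℝ ∞ (fun p : ℝ × ℝ × ℝ => phiY φ p.1 p.2.1 p.2.2) := by
  apply contDiff_deriv_comp (F := fun (p : ℝ × ℝ × ℝ) y' => φ p.1 p.2.1 y')
    (g := fun p => p.2.2)
  · exact hφ.comp (((contDiff_fst.comp contDiff_fst)).prodMk
      (((contDiff_fst.comp contDiff_snd).comp contDiff_fst).prodMk contDiff_snd))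
  · exact contDiff_snd.snd

lemma contDiff_DN (hη : ContDiff ℝ ∞ (uncurry η))
    (hφ : ContDiff ℝ ∞ (fun p : ℝ × ℝ × ℝ => φ p.1 p.2.1 p.2.2)) :
    ContDiff ℝ ∞ (fun p : ℝ × ℝ => DN η φ p.1 p.2) := by
  have hsurf : ContDiff ℝ ∞ (fun p : ℝ × ℝ => ((p.1, p.2, η p.1 p.2) : ℝ × ℝ × ℝ)) :=
    contDiff_fst.prodMk (contDiff_snd.prodMk hη)
  have h1 := (contDiff_phiX hφ).comp hsurf
  have h2 := (contDiff_phiY hφ).comp hsurf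
  exact h2.sub ((contDiff_etaX hη).mul h1)

lemma contDiff_NOp (hη : ContDiff ℝ ∞ (uncurry η))
    (hφ : ContDiff ℝ ∞ (fun p : ℝ × ℝ × ℝ => φ p.1 p.2.1 p.2.2)) :
    ContDiff ℝ ∞ (fun p : ℝ × ℝ => NOp η φ p.1 p.2) := by
  have hsurf : ContDiff ℝ ∞ (fun p : ℝ × ℝ => ((p.1, p.2, η p.1 p.2) : ℝ × ℝ × ℝ)) :=
    contDiff_fst.prodMk (contDiff_snd.prodMk hη)
  have h1 := (contDiff_phiX hφ).comp hsurf
  have h2 := (contDiff_phiY hφ).comp hsurf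
  exact ((contDiff_const.mul (h1.pow 2)).sub (contDiff_const.mul (h2.pow 2))).add
    (((contDiff_etaX hη).mul h1).mul h2)

lemma contDiff_S (hη : ContDiff ℝ ∞ (uncurry η)) :
    ContDiff ℝ ∞ (fun p : ℝ × ℝ => Real.sqrt (1 + (etaX η p.1 p.2)^2)) := by
  apply ContDiff.sqrt (contDiff_const.add ((contDiff_etaX hη).pow 2))
  intro p; positivity

lemma contDiff_V (hη : ContDiff ℝ ∞ (uncurry η)) :
    ContDiff ℝ ∞ (fun p : ℝ × ℝ => etaX η p.1 p.2 / Real.sqrt (1 + (etaX η p.1 p.2)^2)) := by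
  apply (contDiff_etaX hη).div (contDiff_S hη)
  intro p; positivity

lemma contDiff_curv (hη : ContDiff ℝ ∞ (uncurry η)) :
    ContDiff ℝ ∞ (fun p : ℝ × ℝ => curv η p.1 p.2) := by
  apply contDiff_deriv_comp
    (F := fun (p : ℝ × ℝ) x' => etaX η p.1 x' / Real.sqrt (1 + (etaX η p.1 x')^2))
    (g := Prod.snd)
  · exact (contDiff_V hη).comp ((contDiff_fst.comp contDiff_fst).prodMk contDiff_snd)
  · exact contDiff_snd

lemma contDiff_etaXX (hη : ContDiff ℝ ∞ (uncurry η)) :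
    ContDiff ℝ ∞ (fun p : ℝ × ℝ => deriv (fun x' => etaX η p.1 x') p.2) := by
  apply contDiff_deriv_comp (F := fun (p : ℝ × ℝ) x' => etaX η p.1 x') (g := Prod.snd)
  · exact (contDiff_etaX hη).comp ((contDiff_fst.comp contDiff_fst).prodMk contDiff_snd)
  · exact contDiff_snd

lemma contDiff_zeta (hm : ContDiff ℝ ∞ m) (hη : ContDiff ℝ ∞ (uncurry η)) :
    ContDiff ℝ ∞ (fun p : ℝ × ℝ => zeta m η p.1 p.2) := by
  have hm' : ContDiff ℝ ∞ (deriv m) := (contDiff_infty_iff_deriv.mp hm).2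
  have h1 : ContDiff ℝ ∞ (fun p : ℝ × ℝ => deriv (fun x' => m x' * η p.1 x') p.2) := by
    apply contDiff_deriv_comp (F := fun (p : ℝ × ℝ) x' => m x' * η p.1 x') (g := Prod.snd)
    · exact (hm.comp contDiff_snd).mul
        (hη.comp ((contDiff_fst.comp contDiff_fst).prodMk contDiff_snd))
    · exact contDiff_snd
  exact (h1.add ((contDiff_const.mul (contDiff_const.sub (hm'.comp contDiff_snd))).mul
    hη)).sub (contDiff_const.mul hη)

end smoothness
end WWHelpers

section SolHelpers
open Function ContDiff

lemma sectx {F : ℝ → ℝ → ℝ} (hF : ContDiff ℝ ∞ (fun p : ℝ × ℝ => F p.1 p.2)) (t : ℝ) :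
    ContDiff ℝ ∞ (F t) := hF.comp (contDiff_const.prodMk contDiff_id)

lemma sectt {F : ℝ → ℝ → ℝ} (hF : ContDiff ℝ ∞ (fun p : ℝ × ℝ => F p.1 p.2)) (x : ℝ) :
    ContDiff ℝ ∞ (fun s => F s x) := hF.comp (contDiff_id.prodMk contDiff_const)

lemma hda {f : ℝ → ℝ} (hf : ContDiff ℝ ∞ f) (x : ℝ) : HasDerivAt f (deriv f x) x :=
  (hf.differentiable (by simp) x).hasDerivAt

lemma per_LR {L : ℝ} {f : ℝ → ℝ} (hf : ∀ x, f (x + 2*L) = f x) : f L = f (-L) := by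
  have h := hf (-L); rw [show -L + 2*L = L by ring] at h; exact h

lemma isum2 {f g : ℝ → ℝ} (hf : Continuous f) (hg : Continuous g) (a b : ℝ) :
    (∫ x in a..b, (f x + g x)) = (∫ x in a..b, f x) + ∫ x in a..b, g x :=
  intervalIntegral.integral_add (hf.intervalIntegrable a b) (hg.intervalIntegrable a b)

end SolHelpers

noncomputable section PointwiseHelpers
open Function ContDiff

/-- second x-derivative of η -/
def EXX (η : ℝ → ℝ → ℝ) (t x : ℝ) : ℝ := deriv (fun x' => etaX η t x') x
/-- x-derivative of DN -/
def GX (η : ℝ → ℝ → ℝ) (φ : ℝ → ℝ → ℝ → ℝ) (t x : ℝ) : ℝ := deriv (fun x' => DN η φ t x') x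
/-- sqrt factor -/
def SF (η : ℝ → ℝ → ℝ) (t x : ℝ) : ℝ := Real.sqrt (1 + (etaX η t x)^2)
/-- etaX / sqrt factor -/
def VF (η : ℝ → ℝ → ℝ) (t x : ℝ) : ℝ := etaX η t x / Real.sqrt (1 + (etaX η t x)^2)
/-- x-derivative of zeta -/
def ZX (m : ℝ → ℝ) (η : ℝ → ℝ → ℝ) (t x : ℝ) : ℝ :=
  -(1/2)*(deriv (deriv m) x * η t x) + (1/2)*(deriv m x * etaX η t x)
    + m x * EXX η t x + (5/4)*(etaX η t x)

variable {η ψ : ℝ → ℝ → ℝ} {φ : ℝ → ℝ → ℝ → ℝ} {m : ℝ → ℝ}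

lemma SF_pos (η : ℝ → ℝ → ℝ) (t x : ℝ) : 0 < SF η t x := by
  have : (0:ℝ) < 1 + (etaX η t x)^2 := by positivity
  exact Real.sqrt_pos.mpr this

lemma SF_ne (η : ℝ → ℝ → ℝ) (t x : ℝ) : SF η t x ≠ 0 := (SF_pos η t x).ne'

lemma SF_sq (η : ℝ → ℝ → ℝ) (t x : ℝ) : SF η t x * SF η t x = 1 + (etaX η t x)^2 :=
  Real.mul_self_sqrt (by positivity)

lemma SF_id (η : ℝ → ℝ → ℝ) (t x : ℝ) :
    SF η t x = 1 / SF η t x + etaX η t x * (etaX η t x / SF η t x) := by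
  have h := SF_sq η t x
  have hne := SF_ne η t x
  field_simp
  nlinarith [h]

lemma zeta_eq (hm : ContDiff ℝ ∞ m) (hη : ContDiff ℝ ∞ (uncurry η)) (s x : ℝ) :
    zeta m η s x = (deriv m x * η s x + m x * etaX η s x)
      + 3/2 * (1 - deriv m x) * η s x - 1/4 * η s x := by
  have h : HasDerivAt (fun x' => m x' * η s x')
      (deriv m x * η s x + m x * etaX η s x) x :=
    (hda hm x).mul (hda (sectx (F := η) hη s) x)
  rw [zeta, h.deriv]

lemma hasDerivAt_EtaX (hη : ContDiff ℝ ∞ (uncurry η)) (t x : ℝ) :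
    HasDerivAt (η t) (etaX η t x) x := hda (sectx (F := η) hη t) x

lemma hasDerivAt_EtaXX (hη : ContDiff ℝ ∞ (uncurry η)) (t x : ℝ) :
    HasDerivAt (etaX η t) (EXX η t x) x := hda (sectx (contDiff_etaX hη) t) x

lemma hasDerivAt_ZX (hm : ContDiff ℝ ∞ m) (hη : ContDiff ℝ ∞ (uncurry η)) (t x : ℝ) :
    HasDerivAt (zeta m η t) (ZX m η t x) x := by
  have hm' : ContDiff ℝ ∞ (deriv m) := (contDiff_infty_iff_deriv.mp hm).2
  have hfun : zeta m η t = fun x' => (deriv m x' * η t x' + m x' * etaX η t x')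
      + 3/2 * (1 - deriv m x') * η t x' - 1/4 * η t x' := funext (zeta_eq hm hη t)
  rw [hfun]
  have h1 : HasDerivAt (fun x' => deriv m x' * η t x')
      (deriv (deriv m) x * η t x + deriv m x * etaX η t x) x :=
    (hda hm' x).mul (hasDerivAt_EtaX hη t x)
  have h2 : HasDerivAt (fun x' => m x' * etaX η t x')
      (deriv m x * etaX η t x + m x * EXX η t x) x :=
    (hda hm x).mul (hasDerivAt_EtaXX hη t x)
  have h3a : HasDerivAt (fun x' => 3/2 * (1 - deriv m x')) (3/2 * (0 - deriv (deriv m) x)) x :=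
    ((hasDerivAt_const x (1:ℝ)).sub (hda hm' x)).const_mul (3/2)
  have h3 : HasDerivAt (fun x' => 3/2 * (1 - deriv m x') * η t x')
      ((3/2 * (0 - deriv (deriv m) x)) * η t x + (3/2 * (1 - deriv m x)) * etaX η t x) x :=
    h3a.mul (hasDerivAt_EtaX hη t x)
  have h4 : HasDerivAt (fun x' => 1/4 * η t x') (1/4 * etaX η t x) x :=
    (hasDerivAt_EtaX hη t x).const_mul (1/4)
  have := ((h1.add h2).add h3).sub h4
  refine this.congr_deriv (Eq.symm ?_)
  rw [ZX, EXX]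
  ring

lemma hasDerivAt_SF (hη : ContDiff ℝ ∞ (uncurry η)) (t x : ℝ) :
    HasDerivAt (SF η t) (etaX η t x * EXX η t x / SF η t x) x := by
  have h1 : HasDerivAt (fun x' => 1 + (etaX η t x')^2)
      ((2:ℕ) * (etaX η t x)^(2-1) * EXX η t x) x :=
    (((hasDerivAt_EtaXX hη t x).pow 2)).const_add 1
  have h2 := h1.sqrt (by positivity)
  refine h2.congr_deriv (Eq.symm ?_)
  rw [SF]
  have hne : Real.sqrt (1 + (etaX η t x)^2) ≠ 0 := SF_ne η t x
  field_simp
  ring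

lemma hasDerivAt_VF (hη : ContDiff ℝ ∞ (uncurry η)) (t x : ℝ) :
    HasDerivAt (VF η t) (curv η t x) x := by
  have hsm : ContDiff ℝ ∞ (VF η t) :=
    sectx (F := VF η) (contDiff_V hη) t
  exact hda hsm x

end PointwiseHelpers

noncomputable section PeriodicityHelpers
open Function ContDiff

variable {η ψ : ℝ → ℝ → ℝ} {φ : ℝ → ℝ → ℝ → ℝ} {m : ℝ → ℝ}

lemma etaX_periodic {t c : ℝ} (hper : ∀ x, η t (x + c) = η t x) (x : ℝ) :
    etaX η t (x + c) = etaX η t x := deriv_periodic hper x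

lemma zeta_periodic {t c : ℝ} (hmper : ∀ x, m (x + c) = m x)
    (hper : ∀ x, η t (x + c) = η t x) (x : ℝ) :
    zeta m η t (x + c) = zeta m η t x := by
  rw [zeta, zeta,
    deriv_periodic (f := fun x' => m x' * η t x') (fun y => by show m (y + c) * η t (y + c) = m y * η t y; rw [hmper, hper]) x,
    deriv_periodic hmper x, hper x]

lemma DN_periodic {t c : ℝ} (hper : ∀ x, η t (x + c) = η t x)
    (hφper : ∀ x y, φ t (x + c) y = φ t x y) (x : ℝ) :
    DN η φ t (x + c) = DN η φ t x := by
  have hY : phiY φ t (x + c) (η t x) = phiY φ t x (η t x) := by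
    rw [phiY, phiY]
    congr 1
    funext y'
    exact hφper x y'
  have hX : phiX φ t (x + c) (η t x) = phiX φ t x (η t x) := by
    rw [phiX, phiX]
    exact deriv_periodic (f := fun x' => φ t x' (η t x)) (fun x' => hφper x' (η t x)) x
  rw [DN, DN, hper x, etaX_periodic hper x, hY, hX]

lemma SF_periodic {t c : ℝ} (hper : ∀ x, η t (x + c) = η t x) (x : ℝ) :
    SF η t (x + c) = SF η t x := by rw [SF, SF, etaX_periodic hper x]

lemma VF_periodic {t c : ℝ} (hper : ∀ x, η t (x + c) = η t x) (x : ℝ) :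
    VF η t (x + c) = VF η t x := by rw [VF, VF, etaX_periodic hper x]

lemma continuous_EXXsec (hη : ContDiff ℝ ∞ (uncurry η)) (t : ℝ) :
    Continuous (EXX η t) := by
  have h := (contDiff_infty_iff_deriv.mp (sectx (contDiff_etaX hη) t)).2.continuous
  exact h

lemma continuous_GXsec (hη : ContDiff ℝ ∞ (uncurry η))
    (hφ : ContDiff ℝ ∞ (fun p : ℝ × ℝ × ℝ => φ p.1 p.2.1 p.2.2)) (t : ℝ) :
    Continuous (GX η φ t) := by
  have h := (contDiff_infty_iff_deriv.mp (sectx (contDiff_DN hη hφ) t)).2.continuous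
  exact h

end PeriodicityHelpers

set_option maxHeartbeats 2000000 in
open Function ContDiff in
/-- The key identity at a fixed time `t ∈ [0,T]`. -/
lemma key_spatial (L h g κ T : ℝ) (sol : WWSol L h g κ T)
    (m : ℝ → ℝ) (hm : ContDiff ℝ (⊤ : ℕ∞) m) (hmper : ∀ x, m (x + 2*L) = m x)
    (hmodd : ∀ x, m (-x) = - m x) (hmL : m L = 0)
    {t : ℝ} (ht : t ∈ Icc (0:ℝ) T) :
    (∫ x in (-L)..L, deriv (fun s => sol.ψ s x * zeta m sol.η s x) t)
    = 3/2 * (∫ x in (-L)..L, (1 - deriv m x) * sol.ψ t x * DN sol.η sol.φ t x)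
      - (∫ x in (-L)..L, sol.Pext t x * zeta m sol.η t x)
      - (∫ x in (-L)..L, m x * deriv (sol.ψ t) x * DN sol.η sol.φ t x)
      - (∫ x in (-L)..L, zeta m sol.η t x * NOp sol.η sol.φ t x)
      - 1/2 * Htilde L g κ sol.η sol.ψ sol.φ t - R2 L g κ m sol.η t := by
  obtain ⟨η, ψ, P, φ, hηs, hψs, hPs, hφs, hηper, hηev, hψper, hψev, hPper, hPev,
    hφper, hφev, hharm, hbot, hsurf, hevη, hevψ, hlb, hmean, hPmean⟩ := sol
  simp only at *
  -- smoothness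
  have cη : ContDiff ℝ ∞ (uncurry η) := hηs.of_le (by simp)
  have cψ : ContDiff ℝ ∞ (uncurry ψ) := hψs.of_le (by simp)
  have cP : ContDiff ℝ ∞ (uncurry P) := hPs.of_le (by simp)
  have cφ : ContDiff ℝ ∞ (fun p : ℝ × ℝ × ℝ => φ p.1 p.2.1 p.2.2) := hφs.of_le (by simp)
  have hm' : ContDiff ℝ ∞ m := hm.of_le (by simp)
  have cM' : ContDiff ℝ ∞ (deriv m) := (contDiff_infty_iff_deriv.mp hm').2
  have cM'' : Continuous (deriv (deriv m)) := (contDiff_infty_iff_deriv.mp cM').2.continuous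
  -- continuity of sections
  have sη : ContDiff ℝ ∞ (η t) := sectx (F := η) cη t
  have sψ : ContDiff ℝ ∞ (ψ t) := sectx (F := ψ) cψ t
  have sψx : ContDiff ℝ ∞ (deriv (ψ t)) := (contDiff_infty_iff_deriv.mp sψ).2
  have sEx : ContDiff ℝ ∞ (etaX η t) := sectx (contDiff_etaX cη) t
  have sG : ContDiff ℝ ∞ (DN η φ t) := sectx (contDiff_DN cη cφ) t
  have cGx : Continuous (GX η φ t) := continuous_GXsec cη cφ t
  have cExx : Continuous (EXX η t) := continuous_EXXsec cη t
  have cN : Continuous (NOp η φ t) := (sectx (contDiff_NOp cη cφ) t).continuous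
  have cHc : Continuous (curv η t) := (sectx (contDiff_curv cη) t).continuous
  have cS : Continuous (SF η t) := (sectx (F := SF η) (contDiff_S cη) t).continuous
  have cV : Continuous (VF η t) := (sectx (F := VF η) (contDiff_V cη) t).continuous
  have cZ : Continuous (zeta m η t) := (sectx (F := zeta m η) (contDiff_zeta hm' cη) t).continuous
  have cPt : Continuous (P t) := (sectx (F := P) cP t).continuous
  have cSinv : Continuous (fun x => 1 / SF η t x) :=
    continuous_const.div cS (fun x => SF_ne η t x)
  -- periodic values at ±L
  have pη : η t L = η t (-L) := per_LR (hηper t)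
  have pψ : ψ t L = ψ t (-L) := per_LR (hψper t)
  have pm : m L = m (-L) := per_LR hmper
  have pZ : zeta m η t L = zeta m η t (-L) :=
    per_LR (fun x => zeta_periodic hmper (hηper t) x)
  have pG : DN η φ t L = DN η φ t (-L) :=
    per_LR (fun x => DN_periodic (hηper t) (fun x' y => hφper t x' y) x)
  have pV : VF η t L = VF η t (-L) := per_LR (fun x => VF_periodic (hηper t) x)
  have pS : SF η t L = SF η t (-L) := per_LR (fun x => SF_periodic (hηper t) x)
  -- the exact-derivative function Q
  set Qf : ℝ → ℝ := fun x => ψ t x * m x * DN η φ t x - g*(m x * (η t x)^2/2)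
    + κ*(zeta m η t x * VF η t x) - κ*(m x * SF η t x) + κ*m x with hQf
  set QD : ℝ → ℝ := fun x =>
    ((deriv (ψ t) x * m x + ψ t x * deriv m x) * DN η φ t x
        + ψ t x * m x * GX η φ t x)
      - g*((deriv m x * (η t x)^2 + m x*(2*η t x^(2-1)*etaX η t x))/2)
      + κ*(ZX m η t x * VF η t x + zeta m η t x * curv η t x)
      - κ*(deriv m x * (1/SF η t x + etaX η t x*(etaX η t x/SF η t x))
            + m x*(etaX η t x * EXX η t x / SF η t x))
      + κ*deriv m x with hQD
  have hQ : ∀ x, HasDerivAt Qf (QD x) x := by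
    intro x
    have p1 : HasDerivAt (fun x' => ψ t x' * m x' * DN η φ t x')
        ((deriv (ψ t) x * m x + ψ t x * deriv m x) * DN η φ t x
          + ψ t x * m x * GX η φ t x) x :=
      ((hda sψ x).mul (hda hm' x)).mul (hda sG x)
    have p2 : HasDerivAt (fun x' => g*(m x' * (η t x')^2/2))
        (g*((deriv m x * (η t x)^2 + m x*(2*η t x^(2-1)*etaX η t x))/2)) x := by
      exact (((hda hm' x).mul ((hasDerivAt_EtaX cη t x).pow 2)).div_const 2).const_mul g
    have p3 : HasDerivAt (fun x' => κ*(zeta m η t x' * VF η t x'))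
        (κ*(ZX m η t x * VF η t x + zeta m η t x * curv η t x)) x :=
      ((hasDerivAt_ZX hm' cη t x).mul (hasDerivAt_VF cη t x)).const_mul κ
    have p4 : HasDerivAt (fun x' => κ*(m x' * SF η t x'))
        (κ*(deriv m x * SF η t x + m x*(etaX η t x * EXX η t x / SF η t x))) x :=
      ((hda hm' x).mul (hasDerivAt_SF cη t x)).const_mul κ
    have p5 : HasDerivAt (fun x' => κ*m x') (κ*deriv m x) x := (hda hm' x).const_mul κ
    have praw := (((p1.sub p2).add p3).sub p4).add p5
    rw [hQf, hQD]
    refine praw.congr_deriv (Eq.symm ?_)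
    have hid := SF_id η t x
    linear_combination (κ * deriv m x) * hid
  have cZXc : Continuous (ZX m η t) := by
    unfold ZX
    exact ((((continuous_const.mul (cM''.mul sη.continuous)).add
      (continuous_const.mul (cM'.continuous.mul sEx.continuous))).add
      (hm'.continuous.mul cExx)).add (continuous_const.mul sEx.continuous))
  have cQD : Continuous QD := by
    rw [hQD]
    have t1 : Continuous (fun x => (deriv (ψ t) x * m x + ψ t x * deriv m x) * DN η φ t x
        + ψ t x * m x * GX η φ t x) :=
      (((sψx.continuous.mul hm'.continuous).add
        (sψ.continuous.mul cM'.continuous)).mul sG.continuous).add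
        ((sψ.continuous.mul hm'.continuous).mul cGx)
    have t2 : Continuous (fun x => g*((deriv m x * (η t x)^2
        + m x*(2*η t x^(2-1)*etaX η t x))/2)) :=
      continuous_const.mul (((cM'.continuous.mul (sη.continuous.pow 2)).add
        (hm'.continuous.mul ((continuous_const.mul (sη.continuous.pow (2-1))).mul
          sEx.continuous))).div_const 2)
    have t3 : Continuous (fun x => κ*(ZX m η t x * VF η t x
        + zeta m η t x * curv η t x)) :=
      continuous_const.mul ((cZXc.mul cV).add (cZ.mul cHc))
    have t4 : Continuous (fun x => κ*(deriv m x * (1/SF η t x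
          + etaX η t x*(etaX η t x/SF η t x))
        + m x*(etaX η t x * EXX η t x / SF η t x))) := by
      have hdiv : Continuous (fun x => etaX η t x / SF η t x) := cV
      have hdiv2 : Continuous (fun x => etaX η t x * EXX η t x / SF η t x) :=
        (sEx.continuous.mul cExx).div cS (fun x => SF_ne η t x)
      exact continuous_const.mul ((cM'.continuous.mul (cSinv.add
        (sEx.continuous.mul hdiv))).add (hm'.continuous.mul hdiv2))
    exact (((t1.sub t2).add t3).sub t4).add (continuous_const.mul cM'.continuous)
  -- ∫ QD = 0
  have hQ0 : (∫ x in (-L)..L, QD x) = 0 := by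
    rw [intervalIntegral.integral_eq_sub_of_hasDerivAt (fun x _ => hQ x)
      (cQD.intervalIntegrable _ _)]
    rw [hQf]
    simp only [pη, pψ, pm, pZ, pG, pV, pS]
    ring
  -- time derivative pointwise
  have hprod : ∀ x, deriv (fun s => ψ s x * zeta m η s x) t
      = (-P t x - g*η t x - NOp η φ t x + κ*curv η t x) * zeta m η t x
        + ψ t x * (deriv m x * DN η φ t x + m x * GX η φ t x
          + 3/2*(1-deriv m x)*DN η φ t x - 1/4*DN η φ t x) := by
    intro x
    have h1 : HasDerivAt (fun s => ψ s x)
        (-P t x - g*η t x - NOp η φ t x + κ*curv η t x) t := by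
      have hh := hda (sectt (F := ψ) cψ x) t
      have he := hevψ t ht x
      convert hh using 1
      linarith
    have hEt : HasDerivAt (fun s => η s x) (DN η φ t x) t := by
      have hh := hda (sectt (F := η) cη x) t
      rwa [hevη t ht x] at hh
    have hExt : HasDerivAt (fun s => etaX η s x) (GX η φ t x) t := by
      have hc := clairaut cη t x
      rw [show (fun x' => deriv (fun s => η s x') t) = fun x' => DN η φ t x'
        from funext (fun x' => hevη t ht x')] at hc
      exact hc
    have h2 : HasDerivAt (fun s => zeta m η s x)
        (deriv m x * DN η φ t x + m x * GX η φ t x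
          + 3/2*(1-deriv m x)*DN η φ t x - 1/4*DN η φ t x) t := by
      rw [show (fun s => zeta m η s x) = fun s => (deriv m x * η s x + m x * etaX η s x)
        + 3/2 * (1 - deriv m x) * η s x - 1/4 * η s x
        from funext (fun s => zeta_eq hm' cη s x)]
      exact (((hEt.const_mul (deriv m x)).add (hExt.const_mul (m x))).add
        (hEt.const_mul (3/2*(1-deriv m x)))).sub (hEt.const_mul (1/4))
    exact (h1.mul h2).deriv
  -- the six integrand pieces
  set F1 : ℝ → ℝ := fun x => 3/2*((1 - deriv m x) * ψ t x * DN η φ t x) with hF1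
  set F2 : ℝ → ℝ := fun x => (-1)*(P t x * zeta m η t x) with hF2
  set F3 : ℝ → ℝ := fun x => (-1)*(m x * deriv (ψ t) x * DN η φ t x) with hF3
  set F4 : ℝ → ℝ := fun x => (-1)*(zeta m η t x * NOp η φ t x) with hF4
  set F5 : ℝ → ℝ := fun x => (-(1/2))*(g/2 * (η t x)^2
    + κ * (etaX η t x)^2 / Real.sqrt (1 + (etaX η t x)^2)
    + 1/2 * ψ t x * DN η φ t x) with hF5
  set R2I : ℝ → ℝ := fun x =>
    -(κ/2) * (deriv (deriv m) x * η t x * etaX η t x / Real.sqrt (1 + (etaX η t x)^2))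
    + κ * (deriv m x * (1 - (etaX η t x)^2 / (2 * Real.sqrt (1 + (etaX η t x)^2))
         - 1 / Real.sqrt (1 + (etaX η t x)^2)))
    + 3*κ/4 * ((etaX η t x)^2 / Real.sqrt (1 + (etaX η t x)^2))
    + g * ((1 - deriv m x) * (η t x)^2) with hR2I
  set F6 : ℝ → ℝ := fun x => (-1)*(R2I x) with hF6
  -- pointwise identity
  have PID : ∀ x, deriv (fun s => ψ s x * zeta m η s x) t
      = F1 x + F2 x + F3 x + F4 x + F5 x + F6 x + QD x := by
    intro x
    rw [hprod x]
    simp only [hF1, hF2, hF3, hF4, hF5, hF6, hR2I, hQD]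
    simp only [zeta_eq hm' cη, ZX, VF, SF]
    have hne : Real.sqrt (1 + (etaX η t x)^2) ≠ 0 := SF_ne η t x
    field_simp
    ring
  -- continuity of the pieces
  have hSne : ∀ x, Real.sqrt (1 + (etaX η t x)^2) ≠ 0 := fun x => SF_ne η t x
  have hcF1 : Continuous F1 := continuous_const.mul
    (((continuous_const.sub cM'.continuous).mul sψ.continuous).mul sG.continuous)
  have hcF2 : Continuous F2 := continuous_const.mul (cPt.mul cZ)
  have hcF3 : Continuous F3 := continuous_const.mul
    ((hm'.continuous.mul sψx.continuous).mul sG.continuous)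
  have hcF4 : Continuous F4 := continuous_const.mul (cZ.mul cN)
  have hcHtI : Continuous (fun x => g/2 * (η t x)^2
      + κ * (etaX η t x)^2 / Real.sqrt (1 + (etaX η t x)^2)
      + 1/2 * ψ t x * DN η φ t x) :=
    ((continuous_const.mul (sη.continuous.pow 2)).add
      ((continuous_const.mul (sEx.continuous.pow 2)).div cS hSne)).add
      ((continuous_const.mul sψ.continuous).mul sG.continuous)
  have hcF5 : Continuous F5 := continuous_const.mul hcHtI
  have hcR2I : Continuous R2I := by
    have c1 : Continuous (fun x => deriv (deriv m) x * η t x * etaX η t x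
        / Real.sqrt (1 + (etaX η t x)^2)) :=
      ((cM''.mul sη.continuous).mul sEx.continuous).div cS hSne
    have c2 : Continuous (fun x => deriv m x * (1
        - (etaX η t x)^2 / (2 * Real.sqrt (1 + (etaX η t x)^2))
        - 1 / Real.sqrt (1 + (etaX η t x)^2))) :=
      cM'.continuous.mul ((continuous_const.sub ((sEx.continuous.pow 2).div
        (continuous_const.mul cS) (fun x => mul_ne_zero two_ne_zero (hSne x)))).sub
        (continuous_const.div cS hSne))
    have c3 : Continuous (fun x => (etaX η t x)^2 / Real.sqrt (1 + (etaX η t x)^2)) :=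
      (sEx.continuous.pow 2).div cS hSne
    have c4 : Continuous (fun x => (1 - deriv m x) * (η t x)^2) :=
      (continuous_const.sub cM'.continuous).mul (sη.continuous.pow 2)
    rw [hR2I]
    exact (((continuous_const.mul c1).add (continuous_const.mul c2)).add
      (continuous_const.mul c3)).add (continuous_const.mul c4)
  have hcF6 : Continuous F6 := continuous_const.mul hcR2I
  -- split the integral
  have hsplit : (∫ x in (-L)..L, deriv (fun s => ψ s x * zeta m η s x) t)
      = (∫ x in (-L)..L, F1 x) + (∫ x in (-L)..L, F2 x) + (∫ x in (-L)..L, F3 x)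
        + (∫ x in (-L)..L, F4 x) + (∫ x in (-L)..L, F5 x) + (∫ x in (-L)..L, F6 x)
        + (∫ x in (-L)..L, QD x) := by
    rw [intervalIntegral.integral_congr (g := fun x =>
      F1 x + F2 x + F3 x + F4 x + F5 x + F6 x + QD x) (fun x _ => PID x)]
    rw [isum2 (((((hcF1.fun_add hcF2).fun_add hcF3).fun_add hcF4).fun_add hcF5).fun_add hcF6) cQD,
        isum2 ((((hcF1.fun_add hcF2).fun_add hcF3).fun_add hcF4).fun_add hcF5) hcF6,
        isum2 (((hcF1.fun_add hcF2).fun_add hcF3).fun_add hcF4) hcF5,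
        isum2 ((hcF1.fun_add hcF2).fun_add hcF3) hcF4,
        isum2 (hcF1.fun_add hcF2) hcF3,
        isum2 hcF1 hcF2]
  -- evaluate each piece
  have eF1 : (∫ x in (-L)..L, F1 x)
      = 3/2 * ∫ x in (-L)..L, (1 - deriv m x) * ψ t x * DN η φ t x := by
    rw [hF1]; exact intervalIntegral.integral_const_mul _ _
  have eF2 : (∫ x in (-L)..L, F2 x)
      = (-1) * ∫ x in (-L)..L, P t x * zeta m η t x := by
    rw [hF2]; exact intervalIntegral.integral_const_mul _ _
  have eF3 : (∫ x in (-L)..L, F3 x)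
      = (-1) * ∫ x in (-L)..L, m x * deriv (ψ t) x * DN η φ t x := by
    rw [hF3]; exact intervalIntegral.integral_const_mul _ _
  have eF4 : (∫ x in (-L)..L, F4 x)
      = (-1) * ∫ x in (-L)..L, zeta m η t x * NOp η φ t x := by
    rw [hF4]; exact intervalIntegral.integral_const_mul _ _
  have eF5 : (∫ x in (-L)..L, F5 x) = (-(1/2)) * Htilde L g κ η ψ φ t := by
    rw [hF5, intervalIntegral.integral_const_mul]
    rfl
  have eR2I : (∫ x in (-L)..L, R2I x) = R2 L g κ m η t := by
    have c1 : Continuous (fun x => -(κ/2) * (deriv (deriv m) x * η t x * etaX η t x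
        / Real.sqrt (1 + (etaX η t x)^2))) :=
      continuous_const.mul (((cM''.mul sη.continuous).mul sEx.continuous).div cS hSne)
    have c2 : Continuous (fun x => κ * (deriv m x * (1
        - (etaX η t x)^2 / (2 * Real.sqrt (1 + (etaX η t x)^2))
        - 1 / Real.sqrt (1 + (etaX η t x)^2)))) :=
      continuous_const.mul (cM'.continuous.mul ((continuous_const.sub
        ((sEx.continuous.pow 2).div (continuous_const.mul cS)
          (fun x => mul_ne_zero two_ne_zero (hSne x)))).sub
        (continuous_const.div cS hSne)))
    have c3 : Continuous (fun x => 3*κ/4 * ((etaX η t x)^2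
        / Real.sqrt (1 + (etaX η t x)^2))) :=
      continuous_const.mul ((sEx.continuous.pow 2).div cS hSne)
    have c4 : Continuous (fun x => g * ((1 - deriv m x) * (η t x)^2)) :=
      continuous_const.mul ((continuous_const.sub cM'.continuous).mul (sη.continuous.pow 2))
    rw [hR2I]
    rw [isum2 ((c1.fun_add c2).fun_add c3) c4, isum2 (c1.fun_add c2) c3, isum2 c1 c2,
      intervalIntegral.integral_const_mul, intervalIntegral.integral_const_mul,
      intervalIntegral.integral_const_mul, intervalIntegral.integral_const_mul]
    rfl
  have eF6 : (∫ x in (-L)..L, F6 x) = (-1) * R2 L g κ m η t := by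
    rw [hF6, intervalIntegral.integral_const_mul, eR2I]
  rw [hsplit, eF1, eF2, eF3, eF4, eF5, eF6, hQ0]
  ring
/-- the identity for the modified energy `H̃` (Lemma 3.6 of the paper). -/
theorem modified_energy_identity
    (L h g κ T : ℝ) (hL : 0 < L) (hh : 0 < h) (hg : 0 < g) (hκ : 0 < κ) (hT : 0 < T)
    (sol : WWSol L h g κ T)
    (m : ℝ → ℝ) (hm : ContDiff ℝ (⊤ : ℕ∞) m) (hmper : ∀ x, m (x + 2*L) = m x)
    (hmodd : ∀ x, m (-x) = - m x) (hmL : m L = 0) :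
    1/2 * (∫ t in (0:ℝ)..T, Htilde L g κ sol.η sol.ψ sol.φ t)
      + (∫ t in (0:ℝ)..T, R2 L g κ m sol.η t)
    = 3/2 * (∫ t in (0:ℝ)..T, ∫ x in (-L)..L,
          (1 - deriv m x) * sol.ψ t x * DN sol.η sol.φ t x)
      - (∫ t in (0:ℝ)..T, ∫ x in (-L)..L, sol.Pext t x * zeta m sol.η t x)
      - ((∫ x in (-L)..L, sol.ψ T x * zeta m sol.η T x)
          - (∫ x in (-L)..L, sol.ψ 0 x * zeta m sol.η 0 x))
      - (∫ t in (0:ℝ)..T, ∫ x in (-L)..L,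
          m x * deriv (sol.ψ t) x * DN sol.η sol.φ t x)
      - (∫ t in (0:ℝ)..T, ∫ x in (-L)..L, zeta m sol.η t x * NOp sol.η sol.φ t x) :=     by
  have hkey : ∀ t ∈ Icc (0:ℝ) T,
      (∫ x in (-L)..L, deriv (fun s => sol.ψ s x * zeta m sol.η s x) t)
      = 3/2 * (∫ x in (-L)..L, (1 - deriv m x) * sol.ψ t x * DN sol.η sol.φ t x)
        - (∫ x in (-L)..L, sol.Pext t x * zeta m sol.η t x)
        - (∫ x in (-L)..L, m x * deriv (sol.ψ t) x * DN sol.η sol.φ t x)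
        - (∫ x in (-L)..L, zeta m sol.η t x * NOp sol.η sol.φ t x)
        - 1/2 * Htilde L g κ sol.η sol.ψ sol.φ t - R2 L g κ m sol.η t :=
    fun t ht => key_spatial L h g κ T sol m hm hmper hmodd hmL ht
  have cη : ContDiff ℝ ((⊤ : ℕ∞) : WithTop ℕ∞) (Function.uncurry sol.η) := sol.η_smooth.of_le (by simp)
  have cψ : ContDiff ℝ ((⊤ : ℕ∞) : WithTop ℕ∞) (Function.uncurry sol.ψ) := sol.ψ_smooth.of_le (by simp)
  have cP : ContDiff ℝ ((⊤ : ℕ∞) : WithTop ℕ∞) (Function.uncurry sol.Pext) := sol.Pext_smooth.of_le (by simp)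
  have cφ : ContDiff ℝ ((⊤ : ℕ∞) : WithTop ℕ∞) (fun p : ℝ × ℝ × ℝ => sol.φ p.1 p.2.1 p.2.2) :=
    sol.φ_smooth.of_le (by simp)
  have hm' : ContDiff ℝ ((⊤ : ℕ∞) : WithTop ℕ∞) m := hm.of_le (by simp)
  have cM' : ContDiff ℝ ((⊤ : ℕ∞) : WithTop ℕ∞) (deriv m) := (contDiff_infty_iff_deriv.mp hm').2
  have cZj : ContDiff ℝ ((⊤ : ℕ∞) : WithTop ℕ∞) (fun p : ℝ × ℝ => zeta m sol.η p.1 p.2) := contDiff_zeta hm' cη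
  have cΦj : ContDiff ℝ ((⊤ : ℕ∞) : WithTop ℕ∞) (fun p : ℝ × ℝ => sol.ψ p.1 p.2 * zeta m sol.η p.1 p.2) := by
    exact ContDiff.mul cψ cZj
  have cTD : Continuous (fun p : ℝ × ℝ =>
      deriv (fun s => sol.ψ s p.2 * zeta m sol.η s p.2) p.1) := by
    have h := contDiff_deriv_comp
      (F := fun (p : ℝ × ℝ) s => sol.ψ s p.2 * zeta m sol.η s p.2) (g := Prod.fst)
      (cΦj.comp (contDiff_snd.prodMk (contDiff_snd.comp contDiff_fst))) contDiff_fst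
    exact h.continuous
  -- Fubini + FTC in time
  have hLL : (-L) ≤ L := by linarith
  have hfub : (∫ t in (0:ℝ)..T, ∫ x in (-L)..L,
        deriv (fun s => sol.ψ s x * zeta m sol.η s x) t)
      = ∫ x in (-L)..L, ∫ t in (0:ℝ)..T,
        deriv (fun s => sol.ψ s x * zeta m sol.η s x) t := by
    apply integral_integral_swap_cont ?_ hT.le hLL
    exact cTD
  have hFTC : ∀ x, (∫ t in (0:ℝ)..T, deriv (fun s => sol.ψ s x * zeta m sol.η s x) t)
      = sol.ψ T x * zeta m sol.η T x - sol.ψ 0 x * zeta m sol.η 0 x := by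
    intro x
    apply intervalIntegral.integral_deriv_eq_sub
    · intro s _
      exact ((sectt (F := fun t x => sol.ψ t x * zeta m sol.η t x) cΦj x).differentiable
        (by simp)).differentiableAt
    · exact (cTD.comp (continuous_id.prodMk continuous_const)).intervalIntegrable _ _
  have hsub : (∫ x in (-L)..L, (sol.ψ T x * zeta m sol.η T x
        - sol.ψ 0 x * zeta m sol.η 0 x))
      = (∫ x in (-L)..L, sol.ψ T x * zeta m sol.η T x)
        - ∫ x in (-L)..L, sol.ψ 0 x * zeta m sol.η 0 x := by
    apply intervalIntegral.integral_sub
    · exact ((sectx (F := fun t x => sol.ψ t x * zeta m sol.η t x) cΦj T).continuous).intervalIntegrable _ _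
    · exact ((sectx (F := fun t x => sol.ψ t x * zeta m sol.η t x) cΦj 0).continuous).intervalIntegrable _ _
  -- continuity in t of each piece
  have jη : Continuous (fun p : ℝ × ℝ => sol.η p.1 p.2) := cη.continuous
  have jψ : Continuous (fun p : ℝ × ℝ => sol.ψ p.1 p.2) := cψ.continuous
  have jP : Continuous (fun p : ℝ × ℝ => sol.Pext p.1 p.2) := cP.continuous
  have jG : Continuous (fun p : ℝ × ℝ => DN sol.η sol.φ p.1 p.2) :=
    (contDiff_DN cη cφ).continuous
  have jZ : Continuous (fun p : ℝ × ℝ => zeta m sol.η p.1 p.2) := cZj.continuous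
  have jN : Continuous (fun p : ℝ × ℝ => NOp sol.η sol.φ p.1 p.2) :=
    (contDiff_NOp cη cφ).continuous
  have jψx : Continuous (fun p : ℝ × ℝ => deriv (sol.ψ p.1) p.2) :=
    (contDiff_etaX cψ).continuous
  have jEx : Continuous (fun p : ℝ × ℝ => etaX sol.η p.1 p.2) := (contDiff_etaX cη).continuous
  have jS : Continuous (fun p : ℝ × ℝ => Real.sqrt (1 + (etaX sol.η p.1 p.2)^2)) :=
    (contDiff_S cη).continuous
  have jSne : ∀ p : ℝ × ℝ, Real.sqrt (1 + (etaX sol.η p.1 p.2)^2) ≠ 0 :=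
    fun p => SF_ne sol.η p.1 p.2
  have jm : Continuous (fun p : ℝ × ℝ => m p.2) := hm'.continuous.comp continuous_snd
  have jm' : Continuous (fun p : ℝ × ℝ => deriv m p.2) := cM'.continuous.comp continuous_snd
  have jm'' : Continuous (fun p : ℝ × ℝ => deriv (deriv m) p.2) :=
    ((contDiff_infty_iff_deriv.mp cM').2.continuous).comp continuous_snd
  have cW1 : Continuous (fun t => ∫ x in (-L)..L,
      (1 - deriv m x) * sol.ψ t x * DN sol.η sol.φ t x) := by
    apply intervalIntegral.continuous_parametric_intervalIntegral_of_continuous'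
    exact (((continuous_const.sub jm').mul jψ).mul jG)
  have cW2 : Continuous (fun t => ∫ x in (-L)..L, sol.Pext t x * zeta m sol.η t x) := by
    apply intervalIntegral.continuous_parametric_intervalIntegral_of_continuous'
    exact jP.mul jZ
  have cW3 : Continuous (fun t => ∫ x in (-L)..L,
      m x * deriv (sol.ψ t) x * DN sol.η sol.φ t x) := by
    apply intervalIntegral.continuous_parametric_intervalIntegral_of_continuous'
    exact (jm.mul jψx).mul jG
  have cW4 : Continuous (fun t => ∫ x in (-L)..L,
      zeta m sol.η t x * NOp sol.η sol.φ t x) := by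
    apply intervalIntegral.continuous_parametric_intervalIntegral_of_continuous'
    exact jZ.mul jN
  have cW5 : Continuous (fun t => Htilde L g κ sol.η sol.ψ sol.φ t) := by
    apply intervalIntegral.continuous_parametric_intervalIntegral_of_continuous'
    exact ((continuous_const.mul (jη.pow 2)).add
      ((continuous_const.mul (jEx.pow 2)).div jS jSne)).add
      ((continuous_const.mul jψ).mul jG)
  have cW6 : Continuous (fun t => R2 L g κ m sol.η t) := by
    have c1 : Continuous (fun t => ∫ x in (-L)..L, deriv (deriv m) x * sol.η t x
        * etaX sol.η t x / Real.sqrt (1 + (etaX sol.η t x)^2)) := by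
      apply intervalIntegral.continuous_parametric_intervalIntegral_of_continuous'
      exact ((jm''.mul jη).mul jEx).div jS jSne
    have c2 : Continuous (fun t => ∫ x in (-L)..L, deriv m x *
        (1 - (etaX sol.η t x)^2 / (2 * Real.sqrt (1 + (etaX sol.η t x)^2))
          - 1 / Real.sqrt (1 + (etaX sol.η t x)^2))) := by
      apply intervalIntegral.continuous_parametric_intervalIntegral_of_continuous'
      exact jm'.mul ((continuous_const.sub ((jEx.pow 2).div (continuous_const.mul jS)
        (fun p => mul_ne_zero two_ne_zero (jSne p)))).sub (continuous_const.div jS jSne))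
    have c3 : Continuous (fun t => ∫ x in (-L)..L,
        (etaX sol.η t x)^2 / Real.sqrt (1 + (etaX sol.η t x)^2)) := by
      apply intervalIntegral.continuous_parametric_intervalIntegral_of_continuous'
      exact (jEx.pow 2).div jS jSne
    have c4 : Continuous (fun t => ∫ x in (-L)..L, (1 - deriv m x) * (sol.η t x)^2) := by
      apply intervalIntegral.continuous_parametric_intervalIntegral_of_continuous'
      exact (continuous_const.sub jm').mul (jη.pow 2)
    exact (((continuous_const.mul c1).add (continuous_const.mul c2)).add
      (continuous_const.mul c3)).add (continuous_const.mul c4)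
  -- split the time integral of the key identity
  have hsplitT : (∫ t in (0:ℝ)..T, ∫ x in (-L)..L,
        deriv (fun s => sol.ψ s x * zeta m sol.η s x) t)
      = 3/2 * (∫ t in (0:ℝ)..T, ∫ x in (-L)..L,
            (1 - deriv m x) * sol.ψ t x * DN sol.η sol.φ t x)
        - (∫ t in (0:ℝ)..T, ∫ x in (-L)..L, sol.Pext t x * zeta m sol.η t x)
        - (∫ t in (0:ℝ)..T, ∫ x in (-L)..L,
            m x * deriv (sol.ψ t) x * DN sol.η sol.φ t x)
        - (∫ t in (0:ℝ)..T, ∫ x in (-L)..L, zeta m sol.η t x * NOp sol.η sol.φ t x)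
        - 1/2 * (∫ t in (0:ℝ)..T, Htilde L g κ sol.η sol.ψ sol.φ t)
        - ∫ t in (0:ℝ)..T, R2 L g κ m sol.η t := by
    rw [intervalIntegral.integral_congr (g := fun t =>
      3/2 * (∫ x in (-L)..L, (1 - deriv m x) * sol.ψ t x * DN sol.η sol.φ t x)
        - (∫ x in (-L)..L, sol.Pext t x * zeta m sol.η t x)
        - (∫ x in (-L)..L, m x * deriv (sol.ψ t) x * DN sol.η sol.φ t x)
        - (∫ x in (-L)..L, zeta m sol.η t x * NOp sol.η sol.φ t x)
        - 1/2 * Htilde L g κ sol.η sol.ψ sol.φ t - R2 L g κ m sol.η t)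
      (fun t ht' => hkey t (by rwa [uIcc_of_le hT.le] at ht'))]
    rw [intervalIntegral.integral_sub ((((((continuous_const.fun_mul cW1).fun_sub cW2).fun_sub cW3).fun_sub
        cW4).fun_sub (continuous_const.fun_mul cW5)).intervalIntegrable _ _) (cW6.intervalIntegrable _ _),
      intervalIntegral.integral_sub (((((continuous_const.fun_mul cW1).fun_sub cW2).fun_sub cW3).fun_sub
        cW4).intervalIntegrable _ _) ((continuous_const.fun_mul cW5).intervalIntegrable _ _),
      intervalIntegral.integral_sub ((((continuous_const.fun_mul cW1).fun_sub cW2).fun_sub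
        cW3).intervalIntegrable _ _) (cW4.intervalIntegrable _ _),
      intervalIntegral.integral_sub (((continuous_const.fun_mul cW1).fun_sub
        cW2).intervalIntegrable _ _) (cW3.intervalIntegrable _ _),
      intervalIntegral.integral_sub ((continuous_const.fun_mul cW1).intervalIntegrable _ _)
        (cW2.intervalIntegrable _ _),
      intervalIntegral.integral_const_mul, intervalIntegral.integral_const_mul]
  have hboth : (∫ x in (-L)..L, sol.ψ T x * zeta m sol.η T x)
        - (∫ x in (-L)..L, sol.ψ 0 x * zeta m sol.η 0 x)
      = 3/2 * (∫ t in (0:ℝ)..T, ∫ x in (-L)..L,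
            (1 - deriv m x) * sol.ψ t x * DN sol.η sol.φ t x)
        - (∫ t in (0:ℝ)..T, ∫ x in (-L)..L, sol.Pext t x * zeta m sol.η t x)
        - (∫ t in (0:ℝ)..T, ∫ x in (-L)..L,
            m x * deriv (sol.ψ t) x * DN sol.η sol.φ t x)
        - (∫ t in (0:ℝ)..T, ∫ x in (-L)..L, zeta m sol.η t x * NOp sol.η sol.φ t x)
        - 1/2 * (∫ t in (0:ℝ)..T, Htilde L g κ sol.η sol.ψ sol.φ t)
        - ∫ t in (0:ℝ)..T, R2 L g κ m sol.η t := by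
    rw [← hsplitT, hfub, intervalIntegral.integral_congr (fun x _ => hFTC x), hsub]
  linarith [hboth]
end
end
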